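/- For every finite axiom system E over CCS_f that is sound modulo ∼_B, there exists n ≥ 0 such that the equation ε_n: f(α.0, p_n) ≈ α.p_n + Σ_{i=0}^n τ.(α^{≤i}), where p_n = Σ_{i=0}^n ᾱ.(α^{≤i}), is sound modulo ∼_B but is not derivable from E. Consequently, bisimilarity ∼_B has no finite, ground-complete axiomatisation over CCS_f. -/
import Mathlib


/-- The actions over the singleton set of names `A = {a}`: `a`, `ā` and `τ`. -/
inductive ActF : Type
  | a : ActF
  | abar : ActF
  | tau : ActF
  deriving DecidableEq

/-- Complementation of actions (`co` of τ is τ; it is only ever used on non-τ actions). -/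
def ActF.co : ActF → ActF
  | .a => .abar
  | .abar => .a
  | .tau => .tau

/-- Terms of CCS_f : CCS extended with a binary operator `f`. -/
inductive Tm : Type
  | nil : Tm
  | var : ℕ → Tm
  | pre : ActF → Tm → Tm
  | plus : Tm → Tm → Tm
  | par : Tm → Tm → Tm
  | f : Tm → Tm → Tm

/-- The SOS transition relation of CCS_f, where `f` interleaves from the left with
any action and allows communication between its arguments. -/
inductive Step : Tm → ActF → Tm → Prop
  | pre (μ : ActF) (t : Tm) : Step (.pre μ t) μ t
  | plusL {t u t' : Tm} {μ : ActF} : Step t μ t' → Step (.plus t u) μ t'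
  | plusR {t u u' : Tm} {μ : ActF} : Step u μ u' → Step (.plus t u) μ u'
  | parL {t u t' : Tm} {μ : ActF} : Step t μ t' → Step (.par t u) μ (.par t' u)
  | parR {t u u' : Tm} {μ : ActF} : Step u μ u' → Step (.par t u) μ (.par t u')
  | comm {t u t' u' : Tm} {β : ActF} : β ≠ ActF.tau → Step t β t' → Step u β.co u' →
      Step (.par t u) .tau (.par t' u')
  | fL {t u t' : Tm} {μ : ActF} : Step t μ t' → Step (.f t u) μ (.par t' u)
  | fComm {t u t' u' : Tm} {β : ActF} : β ≠ ActF.tau → Step t β t' → Step u β.co u' →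
      Step (.f t u) .tau (.par t' u')

/-- A term is closed (a process) if no variable occurs in it. -/
def Closed : Tm → Prop
  | .nil => True
  | .var _ => False
  | .pre _ t => Closed t
  | .plus t u => Closed t ∧ Closed u
  | .par t u => Closed t ∧ Closed u
  | .f t u => Closed t ∧ Closed u

/-- Applying a substitution to a term. -/
def subst (σ : ℕ → Tm) : Tm → Tm
  | .nil => .nil
  | .var x => σ x
  | .pre μ t => .pre μ (subst σ t)
  | .plus t u => .plus (subst σ t) (subst σ u)
  | .par t u => .par (subst σ t) (subst σ u)
  | .f t u => .f (subst σ t) (subst σ u)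

/-- A substitution is closed if all its values are closed. -/
def ClosedSubst (σ : ℕ → Tm) : Prop := ∀ x, Closed (σ x)

/-- `R` is a bisimulation (symmetric, with the transfer property). -/
def IsBisim (R : Tm → Tm → Prop) : Prop :=
  (∀ p q, R p q → R q p) ∧
  (∀ p q μ p', R p q → Step p μ p' → ∃ q', Step q μ q' ∧ R p' q')

/-- Bisimilarity: the largest bisimulation. -/
def Bisim (p q : Tm) : Prop := ∃ R, IsBisim R ∧ R p q

/-- Equations are pairs of terms. -/
abbrev Eqn := Tm × Tm

/-- Derivability in equational logic from the axiom system `E`. -/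
inductive Deriv (E : Set Eqn) : Tm → Tm → Prop
  | ax {t u : Tm} (σ : ℕ → Tm) (h : (t, u) ∈ E) : Deriv E (subst σ t) (subst σ u)
  | refl (t : Tm) : Deriv E t t
  | symm {t u : Tm} (h : Deriv E t u) : Deriv E u t
  | trans {t u v : Tm} (h₁ : Deriv E t u) (h₂ : Deriv E u v) : Deriv E t v
  | pre (μ : ActF) {t u : Tm} (h : Deriv E t u) : Deriv E (.pre μ t) (.pre μ u)
  | plus {t u t' u' : Tm} (h₁ : Deriv E t u) (h₂ : Deriv E t' u') :
      Deriv E (.plus t t') (.plus u u')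
  | par {t u t' u' : Tm} (h₁ : Deriv E t u) (h₂ : Deriv E t' u') :
      Deriv E (.par t t') (.par u u')
  | f {t u t' u' : Tm} (h₁ : Deriv E t u) (h₂ : Deriv E t' u') :
      Deriv E (.f t t') (.f u u')

/-- An equation is sound modulo `sim` if all its closed instances are related by `sim`. -/
def EqnSound (sim : Tm → Tm → Prop) (t u : Tm) : Prop :=
  ∀ σ : ℕ → Tm, ClosedSubst σ → sim (subst σ t) (subst σ u)

/-- An axiom system is sound modulo `sim` if each of its equations is. -/
def SystemSound (sim : Tm → Tm → Prop) (E : Set Eqn) : Prop :=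
  ∀ e ∈ E, EqnSound sim e.1 e.2

/-- An axiom system is ground-complete modulo `sim` if it derives every valid
closed equation. -/
def GroundComplete (sim : Tm → Tm → Prop) (E : Set Eqn) : Prop :=
  ∀ p q : Tm, Closed p → Closed q → sim p q → Deriv E p q

/-- The size of a term: the number of operator symbols occurring in it. -/
def size : Tm → ℕ
  | .nil => 1
  | .var _ => 0
  | .pre _ t => 1 + size t
  | .plus t u => 1 + size t + size u
  | .par t u => 1 + size t + size u
  | .f t u => 1 + size t + size u

/-- The summands of a term: the leaves of its `+`-tree (terms considered modulo
associativity and commutativity of `+`). -/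
def summands : Tm → List Tm
  | .plus t u => summands t ++ summands u
  | t => [t]

/-- `p` has a summand related by `sim` to `r`. -/
def HasSummand (sim : Tm → Tm → Prop) (p r : Tm) : Prop :=
  ∃ s ∈ summands p, sim s r

/-- `pow μ m` is `μ^m`: `μ^0 = 0` and `μ^{m+1} = μ.(μ^m)`. -/
def pow (μ : ActF) : ℕ → Tm
  | 0 => .nil
  | m + 1 => .pre μ (pow μ m)

/-- `upTo μ i` is `μ^{≤i} = μ^1 + μ^2 + ⋯ + μ^i` (the empty sum being 0). -/
def upTo (μ : ActF) : ℕ → Tm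
  | 0 => .nil
  | 1 => pow μ 1
  | i + 2 => .plus (upTo μ (i + 1)) (pow μ (i + 2))

/-- `sum0 g n` is the sum `g 0 + g 1 + ⋯ + g n`. -/
def sum0 (g : ℕ → Tm) : ℕ → Tm
  | 0 => g 0
  | n + 1 => .plus (sum0 g n) (g (n + 1))

/-- `p_n = Σ_{i=0}^n ᾱ.(α^{≤i})`. -/
def pN (α : ActF) (n : ℕ) : Tm := sum0 (fun i => .pre α.co (upTo α i)) n

/-- The left-hand side of the equation `ε_n`: the term `f(α.0, p_n)`. -/
def epsLhs (α : ActF) (n : ℕ) : Tm := .f (.pre α .nil) (pN α n)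

/-- The right-hand side of the equation `ε_n`: the term `α.p_n + Σ_{i=0}^n τ.(α^{≤i})`. -/
def epsRhs (α : ActF) (n : ℕ) : Tm :=
  .plus (.pre α (pN α n)) (sum0 (fun i => .pre .tau (upTo α i)) n)

/-! ### Part 1: basic facts about actions, movelessness, depth and bisimilarity -/

deriving instance DecidableEq for Tm

section Basics

/-- A term with no outgoing transitions. -/
def Moveless (p : Tm) : Prop := ∀ μ q, ¬ Step p μ q

lemma moveless_nil : Moveless .nil := by intro μ q h; cases h

lemma not_moveless_pre (μ : ActF) (t : Tm) : ¬ Moveless (.pre μ t) :=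
  fun h => h μ t (Step.pre μ t)

lemma moveless_plus {a b : Tm} (h : Moveless (.plus a b)) : Moveless a ∧ Moveless b :=
  ⟨fun μ q hs => h μ q (Step.plusL hs), fun μ q hs => h μ q (Step.plusR hs)⟩

lemma moveless_plus_intro {a b : Tm} (ha : Moveless a) (hb : Moveless b) :
    Moveless (.plus a b) := by
  intro μ q hs; cases hs with
  | plusL h => exact ha _ _ h
  | plusR h => exact hb _ _ h

lemma moveless_par {a b : Tm} (h : Moveless (.par a b)) : Moveless a ∧ Moveless b :=
  ⟨fun μ q hs => h μ (.par q b) (Step.parL hs), fun μ q hs => h μ (.par a q) (Step.parR hs)⟩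

lemma moveless_par_intro {a b : Tm} (ha : Moveless a) (hb : Moveless b) :
    Moveless (.par a b) := by
  intro μ q hs; cases hs with
  | parL h => exact ha _ _ h
  | parR h => exact hb _ _ h
  | comm hβ h1 h2 => exact ha _ _ h1

lemma moveless_f {a b : Tm} (h : Moveless (.f a b)) : Moveless a :=
  fun μ q hs => h μ (.par q b) (Step.fL hs)

lemma moveless_f_intro {a b : Tm} (ha : Moveless a) : Moveless (.f a b) := by
  intro μ q hs; cases hs with
  | fL h => exact ha _ _ h
  | fComm hβ h1 h2 => exact ha _ _ h1

/-- Complementation facts. -/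
lemma co_co {α : ActF} (h : α ≠ .tau) : α.co.co = α := by cases α <;> simp [ActF.co] at *

lemma co_ne_tau {α : ActF} (h : α ≠ .tau) : α.co ≠ .tau := by
  cases α <;> simp [ActF.co] at *

lemma co_ne_self {α : ActF} (h : α ≠ .tau) : α.co ≠ α := by
  cases α <;> simp [ActF.co] at *

lemma eq_of_ne_tau_ne_co {α β : ActF} (hα : α ≠ .tau) (hβ : β ≠ .tau) (h : β ≠ α.co) :
    β = α := by cases α <;> cases β <;> simp_all [ActF.co]

/-! ### Syntactic depth -/

def sdepth : Tm → ℕ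
  | .nil => 0
  | .var _ => 0
  | .pre _ t => sdepth t + 1
  | .plus t u => max (sdepth t) (sdepth u)
  | .par t u => sdepth t + sdepth u
  | .f t u => if sdepth t = 0 then 0 else sdepth t + sdepth u

lemma step_sdepth_lt {p q : Tm} {μ : ActF} (h : Step p μ q) : sdepth q < sdepth p := by
  induction h with
  | pre μ t => simp [sdepth]
  | plusL h ih => exact lt_max_iff.2 (Or.inl ih)
  | plusR h ih => exact lt_max_iff.2 (Or.inr ih)
  | parL h ih => exact Nat.add_lt_add_right ih _
  | parR h ih => exact Nat.add_lt_add_left ih _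
  | comm hβ h1 h2 ih1 ih2 => exact Nat.add_lt_add ih1 ih2
  | fL h ih =>
      simp only [sdepth]
      split <;> omega
  | fComm hβ h1 h2 ih1 ih2 =>
      simp only [sdepth]
      split <;> omega

lemma exists_max_step {p : Tm} (h : sdepth p ≠ 0) :
    ∃ μ q, Step p μ q ∧ sdepth q + 1 = sdepth p := by
  induction p with
  | nil => simp [sdepth] at h
  | var x => simp [sdepth] at h
  | pre μ t => exact ⟨μ, t, Step.pre μ t, rfl⟩
  | plus a b iha ihb =>
      simp only [sdepth] at h ⊢
      rcases le_total (sdepth b) (sdepth a) with hm | hm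
      · rw [max_eq_left hm] at h ⊢
        obtain ⟨μ, q, hs, hq⟩ := iha h
        exact ⟨μ, q, Step.plusL hs, hq⟩
      · rw [max_eq_right hm] at h ⊢
        obtain ⟨μ, q, hs, hq⟩ := ihb h
        exact ⟨μ, q, Step.plusR hs, hq⟩
  | par a b iha ihb =>
      simp only [sdepth] at h ⊢
      rcases Nat.eq_zero_or_pos (sdepth a) with ha | ha
      · have hb : sdepth b ≠ 0 := by omega
        obtain ⟨μ, q, hs, hq⟩ := ihb hb
        exact ⟨μ, .par a q, Step.parR hs, by simp [sdepth]; omega⟩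
      · obtain ⟨μ, q, hs, hq⟩ := iha (by omega)
        exact ⟨μ, .par q b, Step.parL hs, by simp [sdepth]; omega⟩
  | f a b iha ihb =>
      simp only [sdepth] at h ⊢
      by_cases ha : sdepth a = 0
      · simp [ha] at h
      · simp only [if_neg ha] at h ⊢
        obtain ⟨μ, q, hs, hq⟩ := iha ha
        exact ⟨μ, .par q b, Step.fL hs, by simp [sdepth]; omega⟩

lemma moveless_of_sdepth {p : Tm} (h : sdepth p = 0) : Moveless p := by
  intro μ q hs
  have := step_sdepth_lt hs
  omega

lemma sdepth_eq_zero_of_moveless {p : Tm} (h : Moveless p) : sdepth p = 0 := by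
  by_contra hne
  obtain ⟨μ, q, hs, _⟩ := exists_max_step hne
  exact h μ q hs

/-! ### Bisimilarity toolkit -/

lemma Bisim.step {p q p' : Tm} {μ : ActF} (h : Bisim p q) (hs : Step p μ p') :
    ∃ q', Step q μ q' ∧ Bisim p' q' := by
  obtain ⟨R, hR, hpq⟩ := h
  obtain ⟨q', hq', hR'⟩ := hR.2 p q μ p' hpq hs
  exact ⟨q', hq', R, hR, hR'⟩

lemma Bisim.symm {p q : Tm} (h : Bisim p q) : Bisim q p := by
  obtain ⟨R, hR, hpq⟩ := h
  exact ⟨R, hR, hR.1 p q hpq⟩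

lemma Bisim.refl (p : Tm) : Bisim p p := by
  refine ⟨fun a b => a = b, ⟨fun a b h => h.symm, ?_⟩, rfl⟩
  rintro a b μ a' rfl hs
  exact ⟨a', hs, rfl⟩

lemma Bisim.trans {p q r : Tm} (h1 : Bisim p q) (h2 : Bisim q r) : Bisim p r := by
  refine ⟨fun a c => ∃ b, Bisim a b ∧ Bisim b c, ⟨?_, ?_⟩, q, h1, h2⟩
  · rintro a c ⟨b, hab, hbc⟩
    exact ⟨b, hbc.symm, hab.symm⟩
  · rintro a c μ a' ⟨b, hab, hbc⟩ hs
    obtain ⟨b', hb', h1'⟩ := hab.step hs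
    obtain ⟨c', hc', h2'⟩ := hbc.step hb'
    exact ⟨c', hc', b', h1', h2'⟩

/-- A convenient way to establish bisimilarity: a relation that is a bisimulation
"up to" symmetry and bisimilarity. -/
lemma bisim_intro (R : Tm → Tm → Prop)
    (h1 : ∀ p q, R p q → ∀ μ p', Step p μ p' →
      ∃ q', Step q μ q' ∧ (R p' q' ∨ R q' p' ∨ Bisim p' q'))
    (h2 : ∀ p q, R p q → ∀ μ q', Step q μ q' →
      ∃ p', Step p μ p' ∧ (R p' q' ∨ R q' p' ∨ Bisim p' q'))
    {p q : Tm} (hpq : R p q) : Bisim p q := by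
  refine ⟨fun a b => R a b ∨ R b a ∨ Bisim a b, ⟨?_, ?_⟩, Or.inl hpq⟩
  · rintro a b (h | h | h)
    · exact Or.inr (Or.inl h)
    · exact Or.inl h
    · exact Or.inr (Or.inr h.symm)
  · rintro a b μ a' (h | h | h) hs
    · obtain ⟨q', hq', hr⟩ := h1 a b h μ a' hs
      exact ⟨q', hq', hr⟩
    · obtain ⟨q', hq', hr⟩ := h2 b a h μ a' hs
      refine ⟨q', hq', ?_⟩
      rcases hr with h | h | h
      · exact Or.inr (Or.inl h)
      · exact Or.inl h
      · exact Or.inr (Or.inr h.symm)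
    · obtain ⟨q', hq', hr⟩ := h.step hs
      exact ⟨q', hq', Or.inr (Or.inr hr)⟩

lemma bisim_moveless {p q : Tm} (h : Bisim p q) (hp : Moveless p) : Moveless q := by
  intro μ q' hs
  obtain ⟨p', hp', _⟩ := h.symm.step hs
  exact hp μ p' hp'

lemma bisim_sdepth_le : ∀ k p q, sdepth p ≤ k → Bisim p q → sdepth p ≤ sdepth q := by
  intro k
  induction k with
  | zero => intro p q hp _; omega
  | succ k ih =>
      intro p q hp hb
      rcases Nat.eq_zero_or_pos (sdepth p) with h0 | h0
      · omega
      · obtain ⟨μ, p', hs, hd⟩ := exists_max_step (p := p) (by omega)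
        obtain ⟨q', hq', hb'⟩ := hb.step hs
        have hle : sdepth p' ≤ k := by omega
        have h1 : sdepth p' ≤ sdepth q' := ih p' q' hle hb'
        have h2 := step_sdepth_lt hq'
        omega

lemma bisim_sdepth {p q : Tm} (h : Bisim p q) : sdepth p = sdepth q :=
  Nat.le_antisymm (bisim_sdepth_le (sdepth p) p q le_rfl h)
    (bisim_sdepth_le (sdepth q) q p le_rfl h.symm)

/-! ### Congruence and absorption laws for bisimilarity -/

lemma bisim_pre {p q : Tm} (μ : ActF) (h : Bisim p q) : Bisim (.pre μ p) (.pre μ q) := by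
  refine bisim_intro (fun a b => ∃ p q, Bisim p q ∧ a = .pre μ p ∧ b = .pre μ q) ?_ ?_
    ⟨p, q, h, rfl, rfl⟩
  · rintro a b ⟨p, q, h, rfl, rfl⟩ ν a' hs
    cases hs
    exact ⟨q, Step.pre μ q, Or.inr (Or.inr h)⟩
  · rintro a b ⟨p, q, h, rfl, rfl⟩ ν b' hs
    cases hs
    exact ⟨p, Step.pre μ p, Or.inr (Or.inr h)⟩

lemma bisim_plus {p q p' q' : Tm} (h1 : Bisim p q) (h2 : Bisim p' q') :
    Bisim (.plus p p') (.plus q q') := by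
  refine bisim_intro
    (fun a b => ∃ p q p' q', Bisim p q ∧ Bisim p' q' ∧ a = .plus p p' ∧ b = .plus q q') ?_ ?_
    ⟨p, q, p', q', h1, h2, rfl, rfl⟩
  · rintro a b ⟨p, q, p', q', h1, h2, rfl, rfl⟩ ν a' hs
    cases hs with
    | plusL hs =>
        obtain ⟨w, hw, hb⟩ := h1.step hs
        exact ⟨w, Step.plusL hw, Or.inr (Or.inr hb)⟩
    | plusR hs =>
        obtain ⟨w, hw, hb⟩ := h2.step hs
        exact ⟨w, Step.plusR hw, Or.inr (Or.inr hb)⟩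
  · rintro a b ⟨p, q, p', q', h1, h2, rfl, rfl⟩ ν b' hs
    cases hs with
    | plusL hs =>
        obtain ⟨w, hw, hb⟩ := h1.symm.step hs
        exact ⟨w, Step.plusL hw, Or.inr (Or.inr hb.symm)⟩
    | plusR hs =>
        obtain ⟨w, hw, hb⟩ := h2.symm.step hs
        exact ⟨w, Step.plusR hw, Or.inr (Or.inr hb.symm)⟩

private def parRel : Tm → Tm → Prop :=
  fun a b => ∃ p q p' q', Bisim p q ∧ Bisim p' q' ∧ a = .par p p' ∧ b = .par q q'

private lemma parRel_step : ∀ a b, parRel a b → ∀ ν a', Step a ν a' →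
    ∃ b', Step b ν b' ∧ (parRel a' b' ∨ parRel b' a' ∨ Bisim a' b') := by
  rintro a b ⟨p, q, p', q', h1, h2, rfl, rfl⟩ ν a' hs
  cases hs with
  | parL hs =>
      obtain ⟨w, hw, hb⟩ := h1.step hs
      exact ⟨.par w q', Step.parL hw, Or.inl ⟨_, _, _, _, hb, h2, rfl, rfl⟩⟩
  | parR hs =>
      obtain ⟨w, hw, hb⟩ := h2.step hs
      exact ⟨.par q w, Step.parR hw, Or.inl ⟨_, _, _, _, h1, hb, rfl, rfl⟩⟩
  | comm hβ hs1 hs2 =>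
      obtain ⟨w1, hw1, hb1⟩ := h1.step hs1
      obtain ⟨w2, hw2, hb2⟩ := h2.step hs2
      exact ⟨.par w1 w2, Step.comm hβ hw1 hw2, Or.inl ⟨_, _, _, _, hb1, hb2, rfl, rfl⟩⟩

private lemma parRel_symm : ∀ a b, parRel a b → parRel b a := by
  rintro a b ⟨p, q, p', q', h1, h2, rfl, rfl⟩
  exact ⟨q, p, q', p', h1.symm, h2.symm, rfl, rfl⟩

lemma bisim_par {p q p' q' : Tm} (h1 : Bisim p q) (h2 : Bisim p' q') :
    Bisim (.par p p') (.par q q') := by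
  refine bisim_intro parRel parRel_step ?_ ⟨p, q, p', q', h1, h2, rfl, rfl⟩
  intro a b h ν b' hs
  obtain ⟨a', ha', hr⟩ := parRel_step b a (parRel_symm a b h) ν b' hs
  refine ⟨a', ha', ?_⟩
  rcases hr with h | h | h
  · exact Or.inr (Or.inl h)
  · exact Or.inl h
  · exact Or.inr (Or.inr h.symm)

lemma bisim_f {p q p' q' : Tm} (h1 : Bisim p q) (h2 : Bisim p' q') :
    Bisim (.f p p') (.f q q') := by
  refine bisim_intro
    (fun a b => ∃ p q p' q', Bisim p q ∧ Bisim p' q' ∧ a = .f p p' ∧ b = .f q q') ?_ ?_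
    ⟨p, q, p', q', h1, h2, rfl, rfl⟩
  · rintro a b ⟨p, q, p', q', h1, h2, rfl, rfl⟩ ν a' hs
    cases hs with
    | fL hs =>
        obtain ⟨w, hw, hb⟩ := h1.step hs
        exact ⟨.par w q', Step.fL hw, Or.inr (Or.inr (bisim_par hb h2))⟩
    | fComm hβ hs1 hs2 =>
        obtain ⟨w1, hw1, hb1⟩ := h1.step hs1
        obtain ⟨w2, hw2, hb2⟩ := h2.step hs2
        exact ⟨.par w1 w2, Step.fComm hβ hw1 hw2, Or.inr (Or.inr (bisim_par hb1 hb2))⟩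
  · rintro a b ⟨p, q, p', q', h1, h2, rfl, rfl⟩ ν b' hs
    cases hs with
    | fL hs =>
        obtain ⟨w, hw, hb⟩ := h1.symm.step hs
        exact ⟨.par w p', Step.fL hw, Or.inr (Or.inr (bisim_par hb.symm h2))⟩
    | fComm hβ hs1 hs2 =>
        obtain ⟨w1, hw1, hb1⟩ := h1.symm.step hs1
        obtain ⟨w2, hw2, hb2⟩ := h2.symm.step hs2
        exact ⟨.par w1 w2, Step.fComm hβ hw1 hw2,
          Or.inr (Or.inr (bisim_par hb1.symm hb2.symm))⟩

/-- Absorption: a moveless right component of a parallel composition is invisible. -/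
lemma bisim_par_movelessR {p q : Tm} (hq : Moveless q) : Bisim (.par p q) p := by
  refine bisim_intro (fun a b => ∃ q, Moveless q ∧ a = .par b q) ?_ ?_ ⟨q, hq, rfl⟩
  · rintro a b ⟨q, hq, rfl⟩ ν a' hs
    cases hs with
    | parL hs => exact ⟨_, hs, Or.inl ⟨q, hq, rfl⟩⟩
    | parR hs => exact absurd hs (hq _ _)
    | comm hβ hs1 hs2 => exact absurd hs2 (hq _ _)
  · rintro a b ⟨q, hq, rfl⟩ ν b' hs
    exact ⟨.par b' q, Step.parL hs, Or.inl ⟨q, hq, rfl⟩⟩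

lemma bisim_par_movelessL {p q : Tm} (hp : Moveless p) : Bisim (.par p q) q := by
  refine bisim_intro (fun a b => ∃ p, Moveless p ∧ a = .par p b) ?_ ?_ ⟨p, hp, rfl⟩
  · rintro a b ⟨p, hp, rfl⟩ ν a' hs
    cases hs with
    | parL hs => exact absurd hs (hp _ _)
    | parR hs => exact ⟨_, hs, Or.inl ⟨p, hp, rfl⟩⟩
    | comm hβ hs1 hs2 => exact absurd hs1 (hp _ _)
  · rintro a b ⟨p, hp, rfl⟩ ν b' hs
    exact ⟨.par p b', Step.parR hs, Or.inl ⟨p, hp, rfl⟩⟩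

lemma bisim_f_movelessR {p q : Tm} (hq : Moveless q) : Bisim (.f p q) p := by
  refine bisim_intro (fun a b => ∃ q, Moveless q ∧ a = .f b q) ?_ ?_ ⟨q, hq, rfl⟩
  · rintro a b ⟨q, hq, rfl⟩ ν a' hs
    cases hs with
    | fL hs => exact ⟨_, hs, Or.inr (Or.inr (bisim_par_movelessR hq))⟩
    | fComm hβ hs1 hs2 => exact absurd hs2 (hq _ _)
  · rintro a b ⟨q, hq, rfl⟩ ν b' hs
    exact ⟨.par b' q, Step.fL hs, Or.inr (Or.inr (bisim_par_movelessR hq))⟩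

end Basics
/-! ### Part 2: towers, `p_n`, and the rigid behaviour of `G = f(α.0, p_n)` -/

section Gfacts

variable {α : ActF} {n : ℕ}

lemma sdepth_pow (m : ℕ) : sdepth (pow α m) = m := by
  induction m with
  | zero => simp [pow, sdepth]
  | succ m ih => simp [pow, sdepth, ih]

lemma step_pow {m : ℕ} {μ : ActF} {q : Tm} (h : Step (pow α m) μ q) :
    μ = α ∧ ∃ m', m = m' + 1 ∧ q = pow α m' := by
  cases m with
  | zero => cases h
  | succ m => cases h; exact ⟨rfl, m, rfl, rfl⟩

lemma pow_step (m : ℕ) : Step (pow α (m + 1)) α (pow α m) := Step.pre α (pow α m)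

lemma sdepth_upTo (i : ℕ) : sdepth (upTo α i) = i := by
  induction i with
  | zero => simp [upTo, sdepth]
  | succ i ih =>
      cases i with
      | zero => simp [upTo, pow, sdepth]
      | succ j =>
          show sdepth (.plus (upTo α (j + 1)) (pow α (j + 2))) = j + 2
          simp [sdepth, sdepth_pow, ih]

lemma step_upTo {i : ℕ} {μ : ActF} {q : Tm} (h : Step (upTo α i) μ q) :
    μ = α ∧ ∃ m < i, q = pow α m := by
  induction i with
  | zero => cases h
  | succ i ih =>
      cases i with
      | zero =>
          cases h
          exact ⟨rfl, 0, by omega, rfl⟩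
      | succ j =>
          have h' : Step (.plus (upTo α (j + 1)) (pow α (j + 2))) μ q := h
          cases h' with
          | plusL h2 =>
              obtain ⟨h3, m, hm, rfl⟩ := ih h2
              exact ⟨h3, m, by omega, rfl⟩
          | plusR h2 =>
              obtain ⟨h3, m, hm, rfl⟩ := step_pow h2
              exact ⟨h3, m, by omega, rfl⟩

lemma upTo_step : ∀ {i m : ℕ}, m < i → Step (upTo α i) α (pow α m) := by
  intro i
  induction i with
  | zero => intro m h; omega
  | succ i ih =>
      intro m h
      cases i with
      | zero =>
          have hm : m = 0 := by omega
          subst hm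
          exact pow_step 0
      | succ j =>
          show Step (.plus (upTo α (j + 1)) (pow α (j + 2))) α (pow α m)
          rcases Nat.lt_or_ge m (j + 1) with h2 | h2
          · exact Step.plusL (ih h2)
          · have hm : m = j + 1 := by omega
            subst hm
            exact Step.plusR (pow_step (j + 1))

lemma moveless_upTo_zero : Moveless (upTo α 0) := by
  show Moveless .nil
  exact moveless_nil

lemma step_sum0 {g : ℕ → Tm} {m : ℕ} {μ : ActF} {q : Tm} (h : Step (sum0 g m) μ q) :
    ∃ i ≤ m, Step (g i) μ q := by
  induction m with
  | zero => exact ⟨0, le_rfl, h⟩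
  | succ m ih =>
      cases h with
      | plusL h2 =>
          obtain ⟨i, hi, hs⟩ := ih h2
          exact ⟨i, by omega, hs⟩
      | plusR h2 => exact ⟨m + 1, le_rfl, h2⟩

lemma sum0_step {g : ℕ → Tm} {m i : ℕ} {μ : ActF} {q : Tm} (hi : i ≤ m)
    (h : Step (g i) μ q) : Step (sum0 g m) μ q := by
  induction m with
  | zero =>
      have : i = 0 := by omega
      subst this
      exact h
  | succ m ih =>
      rcases Nat.lt_or_ge i (m + 1) with h2 | h2
      · exact Step.plusL (ih (by omega))
      · have : i = m + 1 := by omega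
        subst this
        exact Step.plusR h

lemma step_pN {μ : ActF} {q : Tm} (h : Step (pN α n) μ q) :
    μ = α.co ∧ ∃ i ≤ n, q = upTo α i := by
  obtain ⟨i, hi, hs⟩ := step_sum0 h
  cases hs
  exact ⟨rfl, i, hi, rfl⟩

lemma pN_step {i : ℕ} (hi : i ≤ n) : Step (pN α n) α.co (upTo α i) :=
  sum0_step hi (Step.pre _ _)

lemma sdepth_pN : sdepth (pN α n) = n + 1 := by
  show sdepth (sum0 _ n) = n + 1
  induction n with
  | zero => simp [sum0, sdepth, sdepth_upTo]
  | succ m ih => simp [sum0, sdepth, sdepth_upTo, ih]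

lemma not_moveless_pN : ¬ Moveless (pN α n) := fun h => h _ _ (pN_step (Nat.zero_le n))

/-! ### The transitions of `G` -/

lemma G_step_alpha : Step (epsLhs α n) α (.par .nil (pN α n)) :=
  Step.fL (Step.pre α .nil)

lemma G_step_tau (hα : α ≠ .tau) {i : ℕ} (hi : i ≤ n) :
    Step (epsLhs α n) .tau (.par .nil (upTo α i)) := by
  have h2 : Step (pN α n) α.co (upTo α i) := pN_step hi
  exact Step.fComm hα (Step.pre α .nil) h2

lemma G_step_inv {μ : ActF} {q : Tm} (h : Step (epsLhs α n) μ q) :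
    (μ = α ∧ q = .par .nil (pN α n)) ∨
    (μ = .tau ∧ ∃ i ≤ n, q = .par .nil (upTo α i)) := by
  cases h with
  | fL h2 =>
      cases h2
      exact Or.inl ⟨rfl, rfl⟩
  | fComm hβ h2 h3 =>
      cases h2
      obtain ⟨_, i, hi, rfl⟩ := step_pN h3
      exact Or.inr ⟨rfl, i, hi, rfl⟩

/-! ### Domination and richness -/

def DomG (α : ActF) (n : ℕ) (p : Tm) : Prop :=
  ∀ μ v, Step p μ v → ∃ g, Step (epsLhs α n) μ g ∧ Bisim v g

def RichG (α : ActF) (n : ℕ) (p : Tm) : Prop :=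
  (∃ v, Step p α v ∧ Bisim v (pN α n)) ∧
  (∀ i ≤ n, ∃ v, Step p .tau v ∧ Bisim v (upTo α i))

lemma dom_of_bisim_G {p : Tm} (h : Bisim p (epsLhs α n)) : DomG α n p := by
  intro μ v hs
  obtain ⟨g, hg, hb⟩ := h.step hs
  exact ⟨g, hg, hb⟩

lemma rich_of_bisim_G (hα : α ≠ .tau) {p : Tm} (h : Bisim p (epsLhs α n)) : RichG α n p := by
  constructor
  · obtain ⟨v, hv, hb⟩ := h.symm.step G_step_alpha
    exact ⟨v, hv, hb.symm.trans (bisim_par_movelessL moveless_nil)⟩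
  · intro i hi
    obtain ⟨v, hv, hb⟩ := h.symm.step (G_step_tau hα hi)
    exact ⟨v, hv, hb.symm.trans (bisim_par_movelessL moveless_nil)⟩

lemma dom_classify {p : Tm} (hd : DomG α n p) {μ : ActF} {v : Tm} (hs : Step p μ v) :
    (μ = α ∧ Bisim v (pN α n)) ∨ (μ = .tau ∧ ∃ i ≤ n, Bisim v (upTo α i)) := by
  obtain ⟨g, hg, hb⟩ := hd μ v hs
  rcases G_step_inv hg with ⟨h1, rfl⟩ | ⟨h1, i, hi, rfl⟩
  · exact Or.inl ⟨h1, hb.trans (bisim_par_movelessL moveless_nil)⟩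
  · exact Or.inr ⟨h1, i, hi, hb.trans (bisim_par_movelessL moveless_nil)⟩

lemma dom_no_co (hα : α ≠ .tau) {p : Tm} (hd : DomG α n p) {v : Tm} (hs : Step p α.co v) : False := by
  rcases dom_classify hd hs with ⟨h1, _⟩ | ⟨h1, _⟩
  · exact co_ne_self hα h1
  · exact co_ne_tau hα h1

lemma bisim_G_of_dom_rich {p : Tm} (hd : DomG α n p) (hr : RichG α n p) :
    Bisim p (epsLhs α n) := by
  refine bisim_intro (fun a b => a = p ∧ b = epsLhs α n) ?_ ?_ ⟨rfl, rfl⟩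
  · rintro a b ⟨rfl, rfl⟩ μ a' hs
    obtain ⟨g, hg, hb⟩ := hd μ a' hs
    exact ⟨g, hg, Or.inr (Or.inr hb)⟩
  · rintro a b ⟨rfl, rfl⟩ μ b' hs
    rcases G_step_inv hs with ⟨rfl, rfl⟩ | ⟨rfl, i, hi, rfl⟩
    · obtain ⟨v, hv, hb⟩ := hr.1
      exact ⟨v, hv, Or.inr (Or.inr (hb.trans (bisim_par_movelessL moveless_nil).symm))⟩
    · obtain ⟨v, hv, hb⟩ := hr.2 i hi
      exact ⟨v, hv, Or.inr (Or.inr (hb.trans (bisim_par_movelessL moveless_nil).symm))⟩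

lemma dom_transport {p q : Tm} (h : Bisim p q) (hd : DomG α n p) : DomG α n q := by
  intro μ v hs
  obtain ⟨v', hv', hb⟩ := h.symm.step hs
  obtain ⟨g, hg, hb2⟩ := hd μ v' hv'
  exact ⟨g, hg, hb.trans hb2⟩

/-! ### `G` is not a prefix, not nil, and is parallel-prime -/

lemma nil_not_bisim_G : ¬ Bisim .nil (epsLhs α n) := by
  intro h
  obtain ⟨v, hv, _⟩ := h.symm.step G_step_alpha
  cases hv

lemma pre_not_bisim_G (hα : α ≠ .tau) {μ : ActF} {t : Tm} : ¬ Bisim (.pre μ t) (epsLhs α n) := by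
  intro h
  obtain ⟨v, hv, _⟩ := h.symm.step G_step_alpha
  obtain ⟨w, hw, _⟩ := h.symm.step (G_step_tau hα (Nat.zero_le n))
  cases hv; cases hw
  exact hα rfl

lemma upTo_prime (hα : α ≠ .tau) {p q : Tm} {j : ℕ} (hj : 1 ≤ j) (h : Bisim (.par p q) (upTo α j)) :
    Moveless p ∨ Moveless q := by
  by_contra hc
  push_neg at hc
  obtain ⟨hp, hq⟩ := hc
  have hp' : ¬ Moveless p := hp
  have hq' : ¬ Moveless q := hq
  have hstep : Step (upTo α j) α (pow α 0) := upTo_step (by omega)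
  obtain ⟨v, hv, hb⟩ := h.symm.step hstep
  have hml : Moveless v := bisim_moveless hb (show Moveless .nil from moveless_nil)
  cases hv with
  | parL hs => exact hq' (moveless_par hml).2
  | parR hs => exact hp' (moveless_par hml).1
  | comm hβ h1 h2 => exact hα rfl

lemma G_par_decomp (hα : α ≠ .tau) {p q : Tm} (h : Bisim (.par p q) (epsLhs α n)) :
    Moveless p ∨ Moveless q := by
  by_contra hc
  push_neg at hc
  obtain ⟨hp, hq⟩ := hc
  have hp' : ¬ Moveless p := hp
  have hq' : ¬ Moveless q := hq
  have hDom : DomG α n (.par p q) := dom_of_bisim_G h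
  obtain ⟨W, hW, hbW⟩ := h.symm.step G_step_alpha
  have hbW' : Bisim W (pN α n) :=
    hbW.symm.trans (bisim_par_movelessL moveless_nil)
  cases hW with
  | parL hs =>
      -- W = par p' q , q is live
      rename_i p'
      simp only [Moveless, not_forall, not_not] at hq'
      obtain ⟨μ₀, q₀, hq₀⟩ := hq'
      -- the lifted move of q has label α or τ by domination
      have hlift : Step (.par p q) μ₀ (.par p q₀) := Step.parR hq₀
      have hcls := dom_classify hDom hlift
      -- but it also lifts into W which is bisimilar to pN, whose label is ᾱ
      have hlift2 : Step (.par p' q) μ₀ (.par p' q₀) := Step.parR hq₀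
      obtain ⟨w, hw, _⟩ := hbW'.step hlift2
      obtain ⟨hco, _⟩ := step_pN hw
      rcases hcls with ⟨h1, _⟩ | ⟨h1, _⟩
      · exact co_ne_self hα (hco ▸ h1)
      · exact co_ne_tau hα (hco ▸ h1)
  | parR hs =>
      rename_i q'
      simp only [Moveless, not_forall, not_not] at hp'
      obtain ⟨μ₀, p₀, hp₀⟩ := hp'
      have hlift : Step (.par p q) μ₀ (.par p₀ q) := Step.parL hp₀
      have hcls := dom_classify hDom hlift
      have hlift2 : Step (.par p q') μ₀ (.par p₀ q') := Step.parL hp₀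
      obtain ⟨w, hw, _⟩ := hbW'.step hlift2
      obtain ⟨hco, _⟩ := step_pN hw
      rcases hcls with ⟨h1, _⟩ | ⟨h1, _⟩
      · exact co_ne_self hα (hco ▸ h1)
      · exact co_ne_tau hα (hco ▸ h1)
  | comm hβ h1 h2 => exact hα rfl

/-- The fundamental rigidity of `G`: if `f P Q ∼ G` with `Q` live, then `P ∼ α.0`
(it has only `α`-transitions, all to moveless terms, and at least one) and `Q ∼ p_n`. -/
lemma f_rigidity (hα : α ≠ .tau) (hn : 1 ≤ n) {P Q : Tm} (hQ : ¬ Moveless Q)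
    (h : Bisim (.f P Q) (epsLhs α n)) :
    (∃ A, Step P α A ∧ Moveless A) ∧ (∀ μ A, Step P μ A → μ = α ∧ Moveless A) ∧
      Bisim Q (pN α n) := by
  have hDom : DomG α n (.f P Q) := dom_of_bisim_G h
  -- P has no ᾱ-moves
  have hPco : ∀ A, ¬ Step P α.co A := by
    intro A hs
    exact dom_no_co hα hDom (Step.fL hs)
  -- the deepest τ-class of G is matched
  obtain ⟨V, hV, hbV⟩ := h.symm.step (G_step_tau hα (le_refl n))
  have hbV' : Bisim V (upTo α n) := hbV.symm.trans (bisim_par_movelessL moveless_nil)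
  -- helper : a live term bisimilar to `upTo α n` leads to a contradiction
  -- when sitting inside an α-target of `f P Q`
  have main : ∀ T D : Tm, Step P α T → Step Q α.co D → Bisim (.par T D) (upTo α n) →
      Moveless T → Bisim Q (pN α n) := by
    intro T D hPT hQD hTD hmT
    have hfa : Step (.f P Q) α (.par T Q) := Step.fL hPT
    rcases dom_classify hDom hfa with ⟨_, hb⟩ | ⟨hc, _⟩
    · exact (bisim_par_movelessL hmT).symm.trans hb
    · exact absurd hc hα
  -- case analysis on the realization of the class-n τ-move
  cases hV with
  | fL hs =>
      -- V = par T Q with P →τ T : impossible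
      exfalso
      rename_i T
      rcases upTo_prime hα hn hbV' with hmT | hmQ
      · -- Q ∼ upTo α n, but then the α-target of f P Q would have α-moves, unlike pN
        have hbQ : Bisim Q (upTo α n) := (bisim_par_movelessL hmT).symm.trans hbV'
        -- G has an α-move, so f P Q has one; it must come from fL
        obtain ⟨W, hW, hbW⟩ := h.symm.step G_step_alpha
        have hbW' : Bisim W (pN α n) := hbW.symm.trans (bisim_par_movelessL moveless_nil)
        cases hW with
        | fL hs2 =>
            rename_i A
            -- W = par A Q ∼ pN ; Q ∼ upTo α n is live (n ≥ 1), lifts α-move into pN : absurd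
            obtain ⟨q₀, hq₀, _⟩ := hbQ.symm.step (upTo_step (show n - 1 < n by omega))
            obtain ⟨w, hw, _⟩ := hbW'.step (Step.parR hq₀)
            obtain ⟨hco, _⟩ := step_pN hw
            exact co_ne_self hα hco.symm
        | fComm hβ h1 h2 => exact absurd rfl hα
      · exact absurd hmQ hQ
  | fComm hβ h1 h2 =>
      rename_i T D β
      -- β ≠ τ and β ≠ ᾱ, hence β = α
      have hβα : β = α := eq_of_ne_tau_ne_co hα hβ (fun hc => hPco T (hc ▸ h1))
      rw [hβα] at h1 h2
      rcases upTo_prime hα hn hbV' with hmT | hmD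
      · -- T moveless, D ∼ upTo α n : the good case
        have hQpN : Bisim Q (pN α n) := main T D h1 h2 hbV' hmT
        refine ⟨⟨T, h1, hmT⟩, ?_, hQpN⟩
        intro μ A hA
        have hfa : Step (.f P Q) μ (.par A Q) := Step.fL hA
        have hsQ : sdepth Q = n + 1 := by
          rw [bisim_sdepth hQpN, sdepth_pN]
        rcases dom_classify hDom hfa with ⟨h3, hb⟩ | ⟨h3, i, hi, hb⟩
        · refine ⟨h3, ?_⟩
          have := bisim_sdepth hb
          simp only [sdepth, sdepth_pN, hsQ] at this
          exact moveless_of_sdepth (by omega)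
        · exfalso
          have := bisim_sdepth hb
          simp only [sdepth, sdepth_upTo, hsQ] at this
          omega
      · -- D moveless, T ∼ upTo α n : contradiction as above
        exfalso
        have hbT : Bisim T (upTo α n) := (bisim_par_movelessR hmD).symm.trans hbV'
        have hfa : Step (.f P Q) α (.par T Q) := Step.fL h1
        rcases dom_classify hDom hfa with ⟨_, hb⟩ | ⟨hc, _⟩
        · -- par T Q ∼ pN but T is live with an α-move
          obtain ⟨t₀, ht₀, _⟩ := hbT.symm.step (upTo_step (show n - 1 < n by omega))
          obtain ⟨w, hw, _⟩ := hb.step (Step.parL ht₀)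
          obtain ⟨hco, _⟩ := step_pN hw
          exact co_ne_self hα hco.symm
        · exact hα hc

end Gfacts
/-! ### Part 3: semantic summands, the invariant `Phi`, substitution facts, extraction -/

/-- Semantic summand: descend through `+`, and through `‖`/`f` with a moveless partner. -/
inductive SmP : Tm → Tm → Prop
  | refl (p : Tm) : SmP p p
  | plusL {t u s : Tm} : SmP t s → SmP (.plus t u) s
  | plusR {t u s : Tm} : SmP u s → SmP (.plus t u) s
  | parL {t u s : Tm} : Moveless u → SmP t s → SmP (.par t u) s
  | parR {t u s : Tm} : Moveless t → SmP u s → SmP (.par t u) s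
  | fL {t u s : Tm} : Moveless u → SmP t s → SmP (.f t u) s

lemma SmP.trans' {p q r : Tm} (h1 : SmP p q) (h2 : SmP q r) : SmP p r := by
  induction h1 with
  | refl => exact h2
  | plusL h ih => exact SmP.plusL (ih h2)
  | plusR h ih => exact SmP.plusR (ih h2)
  | parL hm h ih => exact SmP.parL hm (ih h2)
  | parR hm h ih => exact SmP.parR hm (ih h2)
  | fL hm h ih => exact SmP.fL hm (ih h2)

/-- Moves of a semantic summand lift to the whole term, up to bisimilarity. -/
lemma SmP_lift {p s : Tm} (h : SmP p s) {μ : ActF} {d : Tm} (hs : Step s μ d) :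
    ∃ D, Step p μ D ∧ Bisim D d := by
  induction h with
  | refl => exact ⟨d, hs, Bisim.refl d⟩
  | plusL h ih =>
      obtain ⟨D, hD, hb⟩ := ih hs
      exact ⟨D, Step.plusL hD, hb⟩
  | plusR h ih =>
      obtain ⟨D, hD, hb⟩ := ih hs
      exact ⟨D, Step.plusR hD, hb⟩
  | parL hm h ih =>
      obtain ⟨D, hD, hb⟩ := ih hs
      exact ⟨.par D _, Step.parL hD, (bisim_par_movelessR hm).trans hb⟩
  | parR hm h ih =>
      obtain ⟨D, hD, hb⟩ := ih hs
      exact ⟨.par _ D, Step.parR hD, (bisim_par_movelessL hm).trans hb⟩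
  | fL hm h ih =>
      obtain ⟨D, hD, hb⟩ := ih hs
      exact ⟨.par D _, Step.fL hD, (bisim_par_movelessR hm).trans hb⟩

/-- Atomic terms: not sums, and parallel/`f`-compositions only with live components. -/
def ATOM : Tm → Prop
  | .plus _ _ => False
  | .par a b => ¬ Moveless a ∧ ¬ Moveless b
  | .f _ b => ¬ Moveless b
  | _ => True

/-- The key invariant: `p` has an atomic semantic summand bisimilar to `G`. -/
def PhiG (α : ActF) (n : ℕ) (p : Tm) : Prop :=
  ∃ s, SmP p s ∧ ATOM s ∧ Bisim s (epsLhs α n)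

lemma dom_SmP {α : ActF} {n : ℕ} {p s : Tm} (h : SmP p s) (hd : DomG α n p) :
    DomG α n s := by
  intro μ v hs
  obtain ⟨D, hD, hb⟩ := SmP_lift h hs
  obtain ⟨g, hg, hb2⟩ := hd μ D hD
  exact ⟨g, hg, hb.symm.trans hb2⟩

lemma bisim_G_of_phi_dom {α : ActF} (hα : α ≠ .tau) {n : ℕ} {p : Tm}
    (hφ : PhiG α n p) (hd : DomG α n p) : Bisim p (epsLhs α n) := by
  obtain ⟨s, hSm, _, hb⟩ := hφ
  have hr : RichG α n s := rich_of_bisim_G hα hb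
  refine bisim_G_of_dom_rich hd ⟨?_, ?_⟩
  · obtain ⟨v, hv, hbv⟩ := hr.1
    obtain ⟨D, hD, hbD⟩ := SmP_lift hSm hv
    exact ⟨D, hD, hbD.trans hbv⟩
  · intro i hi
    obtain ⟨v, hv, hbv⟩ := hr.2 i hi
    obtain ⟨D, hD, hbD⟩ := SmP_lift hSm hv
    exact ⟨D, hD, hbD.trans hbv⟩

lemma phi_pre {α : ActF} (hα : α ≠ .tau) {n : ℕ} {μ : ActF} {p : Tm} :
    ¬ PhiG α n (.pre μ p) := by
  rintro ⟨s, hSm, hA, hb⟩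
  cases hSm
  exact pre_not_bisim_G hα hb

lemma phi_plus {α : ActF} {n : ℕ} {a b : Tm} :
    PhiG α n (.plus a b) ↔ PhiG α n a ∨ PhiG α n b := by
  constructor
  · rintro ⟨s, hSm, hA, hb⟩
    cases hSm with
    | refl => exact absurd hA (by simp [ATOM])
    | plusL h => exact Or.inl ⟨s, h, hA, hb⟩
    | plusR h => exact Or.inr ⟨s, h, hA, hb⟩
  · rintro (⟨s, hSm, hA, hb⟩ | ⟨s, hSm, hA, hb⟩)
    · exact ⟨s, SmP.plusL hSm, hA, hb⟩
    · exact ⟨s, SmP.plusR hSm, hA, hb⟩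

lemma phi_par {α : ActF} {n : ℕ} {a b : Tm} :
    PhiG α n (.par a b) ↔
      (¬ Moveless a ∧ ¬ Moveless b ∧ Bisim (.par a b) (epsLhs α n)) ∨
      (Moveless b ∧ PhiG α n a) ∨ (Moveless a ∧ PhiG α n b) := by
  constructor
  · rintro ⟨s, hSm, hA, hb⟩
    cases hSm with
    | refl => exact Or.inl ⟨hA.1, hA.2, hb⟩
    | parL hm h => exact Or.inr (Or.inl ⟨hm, s, h, hA, hb⟩)
    | parR hm h => exact Or.inr (Or.inr ⟨hm, s, h, hA, hb⟩)
  · rintro (⟨h1, h2, hb⟩ | ⟨hm, s, hSm, hA, hb⟩ | ⟨hm, s, hSm, hA, hb⟩)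
    · exact ⟨.par a b, SmP.refl _, ⟨h1, h2⟩, hb⟩
    · exact ⟨s, SmP.parL hm hSm, hA, hb⟩
    · exact ⟨s, SmP.parR hm hSm, hA, hb⟩

lemma phi_f {α : ActF} {n : ℕ} {a b : Tm} :
    PhiG α n (.f a b) ↔
      (¬ Moveless b ∧ Bisim (.f a b) (epsLhs α n)) ∨ (Moveless b ∧ PhiG α n a) := by
  constructor
  · rintro ⟨s, hSm, hA, hb⟩
    cases hSm with
    | refl => exact Or.inl ⟨hA, hb⟩
    | fL hm h => exact Or.inr ⟨hm, s, h, hA, hb⟩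
  · rintro (⟨h1, hb⟩ | ⟨hm, s, hSm, hA, hb⟩)
    · exact ⟨.f a b, SmP.refl _, h1, hb⟩
    · exact ⟨s, SmP.fL hm hSm, hA, hb⟩

/-! ### Substitution facts -/

lemma subst_closed {t : Tm} (h : Closed t) (σ : ℕ → Tm) : subst σ t = t := by
  induction t with
  | nil => rfl
  | var x => exact absurd h (by simp [Closed])
  | pre μ t ih => simp only [subst]; rw [ih h]
  | plus a b iha ihb => simp only [subst]; rw [iha h.1, ihb h.2]
  | par a b iha ihb => simp only [subst]; rw [iha h.1, ihb h.2]
  | f a b iha ihb => simp only [subst]; rw [iha h.1, ihb h.2]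

lemma closed_subst {σ : ℕ → Tm} (hσ : ClosedSubst σ) (t : Tm) : Closed (subst σ t) := by
  induction t with
  | nil => trivial
  | var x => exact hσ x
  | pre μ t ih => exact ih
  | plus a b iha ihb => exact ⟨iha, ihb⟩
  | par a b iha ihb => exact ⟨iha, ihb⟩
  | f a b iha ihb => exact ⟨iha, ihb⟩

lemma subst_comp (σ ρ : ℕ → Tm) (t : Tm) :
    subst σ (subst ρ t) = subst (fun x => subst σ (ρ x)) t := by
  induction t with
  | nil => rfl
  | var x => rfl
  | pre μ t ih => simp only [subst]; rw [ih]
  | plus a b iha ihb => simp only [subst]; rw [iha, ihb]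
  | par a b iha ihb => simp only [subst]; rw [iha, ihb]
  | f a b iha ihb => simp only [subst]; rw [iha, ihb]

lemma closedSubst_comp {σ : ℕ → Tm} (hσ : ClosedSubst σ) (ρ : ℕ → Tm) :
    ClosedSubst (fun x => subst σ (ρ x)) := fun x => closed_subst hσ (ρ x)

/-- Occurring variables. -/
def varOcc : Tm → List ℕ
  | .nil => []
  | .var x => [x]
  | .pre _ t => varOcc t
  | .plus t u => varOcc t ++ varOcc u
  | .par t u => varOcc t ++ varOcc u
  | .f t u => varOcc t ++ varOcc u

lemma subst_congr {σ₁ σ₂ : ℕ → Tm} : ∀ {t : Tm}, (∀ x ∈ varOcc t, σ₁ x = σ₂ x) →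
    subst σ₁ t = subst σ₂ t := by
  intro t
  induction t with
  | nil => intro _; rfl
  | var x => intro h; exact h x (by simp [varOcc])
  | pre μ t ih => intro h; simp only [subst]; rw [ih h]
  | plus a b iha ihb =>
      intro h; simp only [subst]
      rw [iha fun x hx => h x (by simp [varOcc, hx]),
        ihb fun x hx => h x (by simp [varOcc, hx])]
  | par a b iha ihb =>
      intro h; simp only [subst]
      rw [iha fun x hx => h x (by simp [varOcc, hx]),
        ihb fun x hx => h x (by simp [varOcc, hx])]
  | f a b iha ihb =>
      intro h; simp only [subst]
      rw [iha fun x hx => h x (by simp [varOcc, hx]),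
        ihb fun x hx => h x (by simp [varOcc, hx])]

/-! ### Unwrap positions -/

/-- `Unw σ w₀ w` : the subterm `w₀` sits at an "unwrap position" of `w`: under sums,
and under `‖` / left of `f` whose partner is moveless under `σ`. -/
inductive Unw (σ : ℕ → Tm) (w₀ : Tm) : Tm → Prop
  | base : Unw σ w₀ w₀
  | plusL {t u : Tm} : Unw σ w₀ t → Unw σ w₀ (.plus t u)
  | plusR {t u : Tm} : Unw σ w₀ u → Unw σ w₀ (.plus t u)
  | parL {t u : Tm} : Moveless (subst σ u) → Unw σ w₀ t → Unw σ w₀ (.par t u)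
  | parR {t u : Tm} : Moveless (subst σ t) → Unw σ w₀ u → Unw σ w₀ (.par t u)
  | fL {t u : Tm} : Moveless (subst σ u) → Unw σ w₀ t → Unw σ w₀ (.f t u)

lemma Unw_lift {σ : ℕ → Tm} {w₀ w : Tm} (h : Unw σ w₀ w) {μ : ActF} {d : Tm}
    (hs : Step (subst σ w₀) μ d) : ∃ D, Step (subst σ w) μ D ∧ Bisim D d := by
  induction h with
  | base => exact ⟨d, hs, Bisim.refl d⟩
  | plusL h ih =>
      obtain ⟨D, hD, hb⟩ := ih
      exact ⟨D, Step.plusL hD, hb⟩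
  | plusR h ih =>
      obtain ⟨D, hD, hb⟩ := ih
      exact ⟨D, Step.plusR hD, hb⟩
  | parL hm h ih =>
      obtain ⟨D, hD, hb⟩ := ih
      exact ⟨.par D _, Step.parL hD, (bisim_par_movelessR hm).trans hb⟩
  | parR hm h ih =>
      obtain ⟨D, hD, hb⟩ := ih
      exact ⟨.par _ D, Step.parR hD, (bisim_par_movelessL hm).trans hb⟩
  | fL hm h ih =>
      obtain ⟨D, hD, hb⟩ := ih
      exact ⟨.par D _, Step.fL hD, (bisim_par_movelessR hm).trans hb⟩

/-- `SmP` of a substituted term goes through `Unw` positions. -/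
lemma SmP_of_Unw {σ : ℕ → Tm} {w₀ w : Tm} (h : Unw σ w₀ w) {s : Tm}
    (hs : SmP (subst σ w₀) s) : SmP (subst σ w) s := by
  induction h with
  | base => exact hs
  | plusL h ih => exact SmP.plusL ih
  | plusR h ih => exact SmP.plusR ih
  | parL hm h ih => exact SmP.parL hm ih
  | parR hm h ih => exact SmP.parR hm ih
  | fL hm h ih => exact SmP.fL hm ih

/-! ### The extraction lemma -/

lemma extraction {α : ActF} (hα : α ≠ .tau) {n : ℕ} :
    ∀ {t : Tm} {σ : ℕ → Tm} {s : Tm}, SmP (subst σ t) s → ATOM s →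
    Bisim s (epsLhs α n) →
    (∃ x, Unw σ (.var x) t ∧ SmP (σ x) s) ∨
    (∃ t₁ t₂, Unw σ (.f t₁ t₂) t ∧ s = .f (subst σ t₁) (subst σ t₂)) := by
  intro t
  induction t with
  | nil =>
      intro σ s hSm hA hb
      cases hSm
      exact absurd hb (nil_not_bisim_G)
  | var x =>
      intro σ s hSm hA hb
      exact Or.inl ⟨x, Unw.base, hSm⟩
  | pre μ t ih =>
      intro σ s hSm hA hb
      cases hSm
      exact absurd hb (pre_not_bisim_G hα)
  | plus a b iha ihb =>
      intro σ s hSm hA hb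
      simp only [subst] at hSm
      cases hSm with
      | refl => exact absurd hA (by simp [ATOM])
      | plusL h =>
          rcases iha h hA hb with ⟨x, hu, hs⟩ | ⟨t₁, t₂, hu, hs⟩
          · exact Or.inl ⟨x, Unw.plusL hu, hs⟩
          · exact Or.inr ⟨t₁, t₂, Unw.plusL hu, hs⟩
      | plusR h =>
          rcases ihb h hA hb with ⟨x, hu, hs⟩ | ⟨t₁, t₂, hu, hs⟩
          · exact Or.inl ⟨x, Unw.plusR hu, hs⟩
          · exact Or.inr ⟨t₁, t₂, Unw.plusR hu, hs⟩
  | par a b iha ihb =>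
      intro σ s hSm hA hb
      simp only [subst] at hSm
      cases hSm with
      | refl =>
          exfalso
          rcases G_par_decomp hα hb with hm | hm
          · exact hA.1 hm
          · exact hA.2 hm
      | parL hm h =>
          rcases iha h hA hb with ⟨x, hu, hs⟩ | ⟨t₁, t₂, hu, hs⟩
          · exact Or.inl ⟨x, Unw.parL hm hu, hs⟩
          · exact Or.inr ⟨t₁, t₂, Unw.parL hm hu, hs⟩
      | parR hm h =>
          rcases ihb h hA hb with ⟨x, hu, hs⟩ | ⟨t₁, t₂, hu, hs⟩
          · exact Or.inl ⟨x, Unw.parR hm hu, hs⟩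
          · exact Or.inr ⟨t₁, t₂, Unw.parR hm hu, hs⟩
  | f a b iha ihb =>
      intro σ s hSm hA hb
      simp only [subst] at hSm
      cases hSm with
      | refl => exact Or.inr ⟨a, b, Unw.base, rfl⟩
      | fL hm h =>
          rcases iha h hA hb with ⟨x, hu, hs⟩ | ⟨t₁, t₂, hu, hs⟩
          · exact Or.inl ⟨x, Unw.fL hm hu, hs⟩
          · exact Or.inr ⟨t₁, t₂, Unw.fL hm hu, hs⟩
/-! ### Part 4: pumping machinery -/

/-- `σh` extends `σ` by adding the summand `c` at the variable `y`. -/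
def IsPump (σ σh : ℕ → Tm) (y : ℕ) (c : Tm) : Prop :=
  ∀ z, σh z = σ z ∨ (z = y ∧ σh z = .plus (σ z) c)

/-- Structural relation between `σ`- and `σh`-instances. -/
inductive ExtP (σ σh : ℕ → Tm) : Tm → Tm → Prop
  | refl (p : Tm) : ExtP σ σh p p
  | base (w : Tm) : ExtP σ σh (subst σ w) (subst σh w)
  | par {p ph q qh : Tm} :
      ExtP σ σh p ph → ExtP σ σh q qh → ExtP σ σh (.par p q) (.par ph qh)

section Pump

variable {σ σh : ℕ → Tm} {y : ℕ} {c : Tm}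

lemma mono_ext (hp : IsPump σ σh y c) :
    ∀ {w : Tm} {μ : ActF} {q : Tm}, Step (subst σ w) μ q →
      ∃ qh, Step (subst σh w) μ qh ∧ ExtP σ σh q qh := by
  intro w
  induction w with
  | nil => intro μ q h; cases h
  | var z =>
      intro μ q h
      rcases hp z with he | ⟨_, he⟩
      · refine ⟨q, ?_, ExtP.refl q⟩
        show Step (σh z) μ q
        rw [he]; exact h
      · refine ⟨q, ?_, ExtP.refl q⟩
        show Step (σh z) μ q
        rw [he]; exact Step.plusL h
  | pre ν t ih =>
      intro μ q h
      cases h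
      exact ⟨subst σh t, Step.pre ν (subst σh t), ExtP.base t⟩
  | plus a b iha ihb =>
      intro μ q h
      cases h with
      | plusL h =>
          obtain ⟨qh, hs, he⟩ := iha h
          exact ⟨qh, Step.plusL hs, he⟩
      | plusR h =>
          obtain ⟨qh, hs, he⟩ := ihb h
          exact ⟨qh, Step.plusR hs, he⟩
  | par a b iha ihb =>
      intro μ q h
      cases h with
      | parL h =>
          obtain ⟨qh, hs, he⟩ := iha h
          exact ⟨.par qh (subst σh b), Step.parL hs, ExtP.par he (ExtP.base b)⟩
      | parR h =>
          obtain ⟨qh, hs, he⟩ := ihb h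
          exact ⟨.par (subst σh a) qh, Step.parR hs, ExtP.par (ExtP.base a) he⟩
      | comm hβ h1 h2 =>
          obtain ⟨q1, hs1, he1⟩ := iha h1
          obtain ⟨q2, hs2, he2⟩ := ihb h2
          exact ⟨.par q1 q2, Step.comm hβ hs1 hs2, ExtP.par he1 he2⟩
  | f a b iha ihb =>
      intro μ q h
      cases h with
      | fL h =>
          obtain ⟨qh, hs, he⟩ := iha h
          exact ⟨.par qh (subst σh b), Step.fL hs, ExtP.par he (ExtP.base b)⟩
      | fComm hβ h1 h2 =>
          obtain ⟨q1, hs1, he1⟩ := iha h1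
          obtain ⟨q2, hs2, he2⟩ := ihb h2
          exact ⟨.par q1 q2, Step.fComm hβ hs1 hs2, ExtP.par he1 he2⟩

lemma ext_step (hp : IsPump σ σh y c) {p ph : Tm} (he : ExtP σ σh p ph) :
    ∀ {μ : ActF} {q : Tm}, Step p μ q → ∃ qh, Step ph μ qh := by
  induction he with
  | refl p => exact fun hs => ⟨_, hs⟩
  | base w =>
      intro μ q hs
      obtain ⟨qh, h, _⟩ := mono_ext hp hs
      exact ⟨qh, h⟩
  | par h1 h2 ih1 ih2 =>
      intro μ q hs
      cases hs with
      | parL h =>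
          obtain ⟨qh, hh⟩ := ih1 h
          exact ⟨_, Step.parL hh⟩
      | parR h =>
          obtain ⟨qh, hh⟩ := ih2 h
          exact ⟨_, Step.parR hh⟩
      | comm hβ hl hr =>
          obtain ⟨q1, hh1⟩ := ih1 hl
          obtain ⟨q2, hh2⟩ := ih2 hr
          exact ⟨_, Step.comm hβ hh1 hh2⟩

lemma ext_moveless (hp : IsPump σ σh y c) {p ph : Tm} (he : ExtP σ σh p ph)
    (hm : Moveless ph) : Moveless p := by
  intro μ q hs
  obtain ⟨qh, hh⟩ := ext_step hp he hs
  exact hm μ qh hh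

/-- Adding the pump preserves movelessness, provided the pumped variable is live. -/
lemma ML (hp : IsPump σ σh y c) (hlive : ¬ Moveless (σ y)) :
    ∀ {w : Tm}, Moveless (subst σ w) → Moveless (subst σh w) := by
  intro w
  induction w with
  | nil => intro h; exact h
  | var z =>
      intro h
      rcases hp z with he | ⟨rfl, he⟩
      · show Moveless (σh z); rw [he]; exact h
      · exact absurd h hlive
  | pre ν t ih => intro h; exact absurd h (not_moveless_pre ν _)
  | plus a b iha ihb =>
      intro h
      obtain ⟨h1, h2⟩ := moveless_plus h
      exact moveless_plus_intro (iha h1) (ihb h2)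
  | par a b iha ihb =>
      intro h
      obtain ⟨h1, h2⟩ := moveless_par h
      exact moveless_par_intro (iha h1) (ihb h2)
  | f a b iha ihb =>
      intro h
      exact moveless_f_intro (iha (moveless_f h))

lemma MLE (hp : IsPump σ σh y c) (hlive : ¬ Moveless (σ y)) {p ph : Tm}
    (he : ExtP σ σh p ph) (hm : Moveless p) : Moveless ph := by
  induction he with
  | refl p => exact hm
  | base w => exact ML hp hlive hm
  | par h1 h2 ih1 ih2 =>
      obtain ⟨hl, hr⟩ := moveless_par hm
      exact moveless_par_intro (ih1 hl) (ih2 hr)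

/-- Reverse transfer: a non-`τ` step of the pumped instance whose label differs from
the head of `c` comes from a genuine step. -/
lemma rev_step (hp : IsPump σ σh y c) {γ : ActF} {c0 : Tm} (hc : c = .pre γ c0) :
    ∀ {w : Tm} {μ : ActF} {q : Tm}, μ ≠ γ → μ ≠ .tau → Step (subst σh w) μ q →
      ∃ q', Step (subst σ w) μ q' ∧ ExtP σ σh q' q := by
  intro w
  induction w with
  | nil => intro μ q _ _ h; cases h
  | var z =>
      intro μ q hγ hτ h
      rcases hp z with he | ⟨_, he⟩
      · refine ⟨q, ?_, ExtP.refl q⟩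
        show Step (σ z) μ q
        have : Step (σ z) μ q := by
          have h' : Step (σh z) μ q := h
          rwa [he] at h'
        exact this
      · have h' : Step (.plus (σ z) c) μ q := by
          have h'' : Step (σh z) μ q := h
          rwa [he] at h''
        cases h' with
        | plusL h2 => exact ⟨q, h2, ExtP.refl q⟩
        | plusR h2 =>
            rw [hc] at h2
            cases h2
            exact absurd rfl hγ
  | pre ν t ih =>
      intro μ q hγ hτ h
      cases h
      exact ⟨subst σ t, Step.pre ν (subst σ t), ExtP.base t⟩
  | plus a b iha ihb =>
      intro μ q hγ hτ h
      cases h with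
      | plusL h =>
          obtain ⟨q', hs, he⟩ := iha hγ hτ h
          exact ⟨q', Step.plusL hs, he⟩
      | plusR h =>
          obtain ⟨q', hs, he⟩ := ihb hγ hτ h
          exact ⟨q', Step.plusR hs, he⟩
  | par a b iha ihb =>
      intro μ q hγ hτ h
      cases h with
      | parL h =>
          obtain ⟨q', hs, he⟩ := iha hγ hτ h
          exact ⟨.par q' (subst σ b), Step.parL hs, ExtP.par he (ExtP.base b)⟩
      | parR h =>
          obtain ⟨q', hs, he⟩ := ihb hγ hτ h
          exact ⟨.par (subst σ a) q', Step.parR hs, ExtP.par (ExtP.base a) he⟩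
      | comm hβ h1 h2 => exact absurd rfl hτ
  | f a b iha ihb =>
      intro μ q hγ hτ h
      cases h with
      | fL h =>
          obtain ⟨q', hs, he⟩ := iha hγ hτ h
          exact ⟨.par q' (subst σ b), Step.fL hs, ExtP.par he (ExtP.base b)⟩
      | fComm hβ h1 h2 => exact absurd rfl hτ

/-- Unwrap positions survive pumping. -/
lemma Unw_pump (hp : IsPump σ σh y c) (hlive : ¬ Moveless (σ y)) {w₀ w : Tm}
    (h : Unw σ w₀ w) : Unw σh w₀ w := by
  induction h with
  | base => exact Unw.base
  | plusL h ih => exact Unw.plusL ih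
  | plusR h ih => exact Unw.plusR ih
  | parL hm h ih => exact Unw.parL (ML hp hlive hm) ih
  | parR hm h ih => exact Unw.parR (ML hp hlive hm) ih
  | fL hm h ih => exact Unw.fL (ML hp hlive hm) ih

/-! ### Depth dichotomy and gap -/

lemma dich (hp : IsPump σ σh y c) {B : ℕ} (hB : ∀ z, sdepth (σ z) ≤ B)
    (hcB : B ≤ sdepth c) :
    ∀ w : Tm, sdepth (subst σh w) ≤ (size w + 1) * (B + 1) ∨
      sdepth c ≤ sdepth (subst σh w) := by
  intro w
  induction w with
  | nil =>
      left
      show sdepth .nil ≤ _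
      simp [sdepth]
  | var z =>
      rcases hp z with he | ⟨_, he⟩
      · left
        show sdepth (σh z) ≤ _
        rw [he]
        have := hB z
        have hs : size (Tm.var z) = 0 := rfl
        nlinarith [hB z]
      · right
        show sdepth c ≤ sdepth (σh z)
        rw [he]
        show sdepth c ≤ max (sdepth (σ z)) (sdepth c)
        exact le_max_right _ _
  | pre ν t ih =>
      have hsz : size (Tm.pre ν t) = 1 + size t := rfl
      rcases ih with h | h
      · left
        show sdepth (subst σh t) + 1 ≤ _
        rw [hsz]
        nlinarith
      · right
        show sdepth c ≤ sdepth (subst σh t) + 1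
        omega
  | plus a b iha ihb =>
      have hsz : size (Tm.plus a b) = 1 + size a + size b := rfl
      rcases iha with ha | ha
      · rcases ihb with hb | hb
        · left
          show max (sdepth (subst σh a)) (sdepth (subst σh b)) ≤ _
          rw [hsz]
          have h1 : (size a + 1) * (B+1) ≤ (1 + size a + size b + 1) * (B + 1) := by
            nlinarith
          have h2 : (size b + 1) * (B+1) ≤ (1 + size a + size b + 1) * (B + 1) := by
            nlinarith
          omega
        · right
          show sdepth c ≤ max (sdepth (subst σh a)) (sdepth (subst σh b))
          omega
      · right
        show sdepth c ≤ max (sdepth (subst σh a)) (sdepth (subst σh b))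
        omega
  | par a b iha ihb =>
      have hsz : size (Tm.par a b) = 1 + size a + size b := rfl
      rcases iha with ha | ha
      · rcases ihb with hb | hb
        · left
          show sdepth (subst σh a) + sdepth (subst σh b) ≤ _
          rw [hsz]
          nlinarith
        · right
          show sdepth c ≤ sdepth (subst σh a) + sdepth (subst σh b)
          omega
      · right
        show sdepth c ≤ sdepth (subst σh a) + sdepth (subst σh b)
        omega
  | f a b iha ihb =>
      have hsz : size (Tm.f a b) = 1 + size a + size b := rfl
      show (if sdepth (subst σh a) = 0 then 0
          else sdepth (subst σh a) + sdepth (subst σh b)) ≤ _ ∨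
        sdepth c ≤ (if sdepth (subst σh a) = 0 then 0
          else sdepth (subst σh a) + sdepth (subst σh b))
      split
      · left; omega
      · rcases iha with ha | ha
        · rcases ihb with hb | hb
          · left
            rw [hsz]
            nlinarith
          · right; omega
        · right; omega


private lemma gap_sq_mono {a s B : ℕ} (h : a ≤ s) :
    (a+1)*(a+1)*(B+2) ≤ (s+1)*(s+1)*(B+2) :=
  Nat.mul_le_mul_right _ (Nat.mul_le_mul (by omega) (by omega))

private lemma gap_sq_triv {q B : ℕ} (h : q ≤ B) : q ≤ (0+1)*(0+1)*(B+2) := by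
  have e : (0+1)*(0+1)*(B+2) = B+2 := by ring
  omega

private lemma gap_bound_pre {q s B : ℕ} (h : q ≤ (s + 1) * (B+1)) :
    q ≤ (1 + s + 1)*(1 + s + 1)*(B+2) := by
  refine le_trans h ?_
  have h1 : s + 1 ≤ (1 + s + 1)*(1 + s + 1) :=
    le_trans (by omega) (Nat.le_mul_of_pos_left _ (by omega))
  exact Nat.mul_le_mul h1 (by omega)

private lemma gap_bound_par {a b B x v : ℕ} (hx : x ≤ (a+1)*(a+1)*(B+2))
    (hv : v ≤ (b+1)*(B+1)) : x + v ≤ (1+a+b+1)*(1+a+b+1)*(B+2) := by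
  have h1 : v ≤ (b+1)*(b+1)*(B+2) := le_trans hv
    (Nat.mul_le_mul (Nat.le_mul_of_pos_left _ (by omega)) (by omega))
  have e : (1+a+b+1)*(1+a+b+1)*(B+2)
      = (a+1)*(a+1)*(B+2) + ((b+1)*(b+1)*(B+2) + 2*((a+1)*(b+1)*(B+2))) := by ring
  rw [e]
  calc x + v ≤ (a+1)*(a+1)*(B+2) + (b+1)*(b+1)*(B+2) := Nat.add_le_add hx h1
    _ ≤ _ := Nat.add_le_add_left (Nat.le_add_right _ _) _

private lemma gap_bound_parR {a b B x v : ℕ} (hx : x ≤ (b+1)*(b+1)*(B+2))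
    (hv : v ≤ (a+1)*(B+1)) : v + x ≤ (1+a+b+1)*(1+a+b+1)*(B+2) := by
  have h := gap_bound_par (a := b) (b := a) hx hv
  have e : (1+b+a+1)*(1+b+a+1)*(B+2) = (1+a+b+1)*(1+a+b+1)*(B+2) := by ring
  omega

private lemma gap_bound_comm {a b B x v : ℕ} (hx : x ≤ (a+1)*(a+1)*(B+2))
    (hv : v ≤ (b+1)*(b+1)*(B+2)) : x + v ≤ (1+a+b+1)*(1+a+b+1)*(B+2) := by
  have e : (1+a+b+1)*(1+a+b+1)*(B+2)
      = (a+1)*(a+1)*(B+2) + ((b+1)*(b+1)*(B+2) + 2*((a+1)*(b+1)*(B+2))) := by ring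
  rw [e]
  calc x + v ≤ (a+1)*(a+1)*(B+2) + (b+1)*(b+1)*(B+2) := Nat.add_le_add hx hv
    _ ≤ _ := Nat.add_le_add_left (Nat.le_add_right _ _) _

lemma gap (hp : IsPump σ σh y c) {B Dc : ℕ} (hB : ∀ z, sdepth (σ z) ≤ B)
    (hcB : B ≤ sdepth c) (hDc : ∀ μ q, Step c μ q → Dc ≤ sdepth q)
    (hDcc : Dc ≤ sdepth c) :
    ∀ {w : Tm} {μ : ActF} {q : Tm}, Step (subst σh w) μ q →
      sdepth q ≤ (size w + 1) * (size w + 1) * (B + 2) ∨ Dc ≤ sdepth q := by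
  intro w
  induction w with
  | nil => intro μ q h; cases h
  | var z =>
      intro μ q h
      have h' : Step (σh z) μ q := h
      rcases hp z with he | ⟨_, he⟩
      · rw [he] at h'
        left
        have h1 := step_sdepth_lt h'
        have h2 := hB z
        have hs : size (Tm.var z) = 0 := rfl
        rw [hs]
        exact gap_sq_triv (by omega)
      · rw [he] at h'
        cases h' with
        | plusL h2 =>
            left
            have h3 := step_sdepth_lt h2
            have h4 := hB z
            have hs : size (Tm.var z) = 0 := rfl
            rw [hs]
            exact gap_sq_triv (by omega)
        | plusR h2 => exact Or.inr (hDc _ _ h2)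
  | pre ν t ih =>
      intro μ q h
      cases h
      have hsz : size (Tm.pre ν t) = 1 + size t := rfl
      rcases dich hp hB hcB t with hd | hd
      · left
        rw [hsz]
        exact gap_bound_pre hd
      · exact Or.inr (le_trans hDcc hd)
  | plus a b iha ihb =>
      intro μ q h
      have hsz : size (Tm.plus a b) = 1 + size a + size b := rfl
      cases h with
      | plusL h =>
          rcases iha h with h2 | h2
          · left; rw [hsz]; exact le_trans h2 (gap_sq_mono (by omega))
          · exact Or.inr h2
      | plusR h =>
          rcases ihb h with h2 | h2
          · left; rw [hsz]; exact le_trans h2 (gap_sq_mono (by omega))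
          · exact Or.inr h2
  | par a b iha ihb =>
      intro μ q h
      have hsz : size (Tm.par a b) = 1 + size a + size b := rfl
      cases h with
      | parL h =>
          rcases iha h with h2 | h2
          · rcases dich hp hB hcB b with hd | hd
            · left
              show sdepth _ + sdepth (subst σh b) ≤ _
              rw [hsz]
              exact gap_bound_par h2 hd
            · right
              show Dc ≤ sdepth _ + sdepth (subst σh b)
              have := le_trans hDcc hd
              omega
          · right
            show Dc ≤ sdepth _ + sdepth (subst σh b)
            omega
      | parR h =>
          rcases ihb h with h2 | h2
          · rcases dich hp hB hcB a with hd | hd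
            · left
              show sdepth (subst σh a) + sdepth _ ≤ _
              rw [hsz]
              exact gap_bound_parR h2 hd
            · right
              show Dc ≤ sdepth (subst σh a) + sdepth _
              have := le_trans hDcc hd
              omega
          · right
            show Dc ≤ sdepth (subst σh a) + sdepth _
            omega
      | comm hβ h1 h2 =>
          rcases iha h1 with ha | ha
          · rcases ihb h2 with hb | hb
            · left
              show sdepth _ + sdepth _ ≤ _
              rw [hsz]
              exact gap_bound_comm ha hb
            · right
              show Dc ≤ sdepth _ + sdepth _
              omega
          · right
            show Dc ≤ sdepth _ + sdepth _
            omega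
  | f a b iha ihb =>
      intro μ q h
      have hsz : size (Tm.f a b) = 1 + size a + size b := rfl
      cases h with
      | fL h =>
          rcases iha h with h2 | h2
          · rcases dich hp hB hcB b with hd | hd
            · left
              show sdepth _ + sdepth (subst σh b) ≤ _
              rw [hsz]
              exact gap_bound_par h2 hd
            · right
              show Dc ≤ sdepth _ + sdepth (subst σh b)
              have := le_trans hDcc hd
              omega
          · right
            show Dc ≤ sdepth _ + sdepth (subst σh b)
            omega
      | fComm hβ h1 h2 =>
          rcases iha h1 with ha | ha
          · rcases ihb h2 with hb | hb
            · left
              show sdepth _ + sdepth _ ≤ _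
              rw [hsz]
              exact gap_bound_comm ha hb
            · right
              show Dc ≤ sdepth _ + sdepth _
              omega
          · right
            show Dc ≤ sdepth _ + sdepth _
            omega

end Pump
/-! ### Part 5: detection lemmas -/

lemma step_pre_inv {ν μ : ActF} {t q : Tm} (h : Step (.pre ν t) μ q) : μ = ν ∧ q = t := by
  cases h; exact ⟨rfl, rfl⟩

lemma co_inj {α β : ActF} (hα : α ≠ .tau) (hβ : β ≠ .tau) (h : β.co = α.co) : β = α := by
  cases α <;> cases β <;> simp_all [ActF.co]

/-- Detection for the pump `c = α^M` : a deep `α`-move of the pumped instance can only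
come from the pump, located at an unwrap position; the witness summand transfers. -/
lemma detectA {α : ActF} (hα : α ≠ .tau) {n : ℕ} {σ σh : ℕ → Tm} {x : ℕ}
    {N B M K Tb : ℕ}
    (hp : IsPump σ σh x (pow α M))
    (hB : ∀ z, sdepth (σ z) ≤ B)
    (hKb : ∀ s ≤ N, (s+1)*(s+1)*(B+2) ≤ K)
    (hTb : ∀ s ≤ N, (s+1)*(B+1) ≤ Tb)
    (hbig : 2*K + Tb + B + 2 < M)
    {s : Tm} (hs : SmP (σ x) s) (hsA : ATOM s) (hsG : Bisim s (epsLhs α n)) :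
    ∀ {w : Tm}, size w ≤ N → ∀ {V : Tm}, Step (subst σh w) α V →
      Bisim V (pow α (M-1)) →
      ∃ s', SmP (subst σ w) s' ∧ ATOM s' ∧ Bisim s' (epsLhs α n) := by
  have hcd : sdepth (pow α M) = M := sdepth_pow M
  have hBc : B ≤ sdepth (pow α M) := by rw [hcd]; omega
  have hDc : ∀ μ q, Step (pow α M) μ q → M - 1 ≤ sdepth q := by
    intro μ q h
    obtain ⟨_, m', hm, rfl⟩ := step_pow h
    rw [sdepth_pow]
    omega
  have hDcc : M - 1 ≤ sdepth (pow α M) := by rw [hcd]; omega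
  intro w
  induction w with
  | nil => intro _ V h _; cases h
  | var z =>
      intro _ V h hV
      have hsV : sdepth V = M - 1 := by rw [bisim_sdepth hV, sdepth_pow]
      have h' : Step (σh z) α V := h
      rcases hp z with he | ⟨rfl, he⟩
      · rw [he] at h'
        have h1 := step_sdepth_lt h'
        have h2 := hB z
        omega
      · rw [he] at h'
        cases h' with
        | plusL h2 =>
            have h3 := step_sdepth_lt h2
            have h4 := hB z
            omega
        | plusR h2 => exact ⟨s, hs, hsA, hsG⟩
  | pre ν body ih =>
      intro hsz V h hV
      obtain ⟨hν, rfl⟩ := step_pre_inv h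
      have hsV : sdepth (subst σh body) = M - 1 := by rw [bisim_sdepth hV, sdepth_pow]
      have e : size (Tm.pre ν body) = 1 + size body := rfl
      rcases dich hp hB hBc body with hd | hd
      · have h2 := le_trans hd (hTb (size body) (by omega))
        omega
      · rw [hcd] at hd
        omega
  | plus a b iha ihb =>
      intro hsz V h hV
      have e : size (Tm.plus a b) = 1 + size a + size b := rfl
      cases h with
      | plusL h =>
          obtain ⟨s', h1, h2, h3⟩ := iha (by omega) h hV
          exact ⟨s', SmP.plusL h1, h2, h3⟩
      | plusR h =>
          obtain ⟨s', h1, h2, h3⟩ := ihb (by omega) h hV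
          exact ⟨s', SmP.plusR h1, h2, h3⟩
  | par a b iha ihb =>
      intro hsz V h hV
      have e : size (Tm.par a b) = 1 + size a + size b := rfl
      have hsV : sdepth V = M - 1 := by rw [bisim_sdepth hV, sdepth_pow]
      cases h with
      | parL h =>
          rename_i V₁
          have hsum : sdepth V₁ + sdepth (subst σh b) = M - 1 := hsV
          rcases gap hp hB hBc hDc hDcc h with hg | hg
          · exfalso
            have h1 := le_trans hg (hKb (size a) (by omega))
            rcases dich hp hB hBc b with hd | hd
            · have h2 := le_trans hd (hTb (size b) (by omega))
              omega
            · rw [hcd] at hd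
              omega
          · have hd0 : sdepth (subst σh b) = 0 := by omega
            have hm0 : Moveless (subst σh b) := moveless_of_sdepth hd0
            have hmb : Moveless (subst σ b) := ext_moveless hp (ExtP.base b) hm0
            have hbV₁ : Bisim V₁ (pow α (M-1)) :=
              (bisim_par_movelessR hm0).symm.trans hV
            obtain ⟨s', h1, h2, h3⟩ := iha (by omega) h hbV₁
            exact ⟨s', SmP.parL hmb h1, h2, h3⟩
      | parR h =>
          rename_i V₂
          have hsum : sdepth (subst σh a) + sdepth V₂ = M - 1 := hsV
          rcases gap hp hB hBc hDc hDcc h with hg | hg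
          · exfalso
            have h1 := le_trans hg (hKb (size b) (by omega))
            rcases dich hp hB hBc a with hd | hd
            · have h2 := le_trans hd (hTb (size a) (by omega))
              omega
            · rw [hcd] at hd
              omega
          · have hd0 : sdepth (subst σh a) = 0 := by omega
            have hm0 : Moveless (subst σh a) := moveless_of_sdepth hd0
            have hma : Moveless (subst σ a) := ext_moveless hp (ExtP.base a) hm0
            have hbV₂ : Bisim V₂ (pow α (M-1)) :=
              (bisim_par_movelessL hm0).symm.trans hV
            obtain ⟨s', h1, h2, h3⟩ := ihb (by omega) h hbV₂
            exact ⟨s', SmP.parR hma h1, h2, h3⟩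
      | comm hβ h1 h2 => exact absurd rfl hα
  | f a b iha ihb =>
      intro hsz V h hV
      have e : size (Tm.f a b) = 1 + size a + size b := rfl
      have hsV : sdepth V = M - 1 := by rw [bisim_sdepth hV, sdepth_pow]
      cases h with
      | fL h =>
          rename_i V₁
          have hsum : sdepth V₁ + sdepth (subst σh b) = M - 1 := hsV
          rcases gap hp hB hBc hDc hDcc h with hg | hg
          · exfalso
            have h1 := le_trans hg (hKb (size a) (by omega))
            rcases dich hp hB hBc b with hd | hd
            · have h2 := le_trans hd (hTb (size b) (by omega))
              omega
            · rw [hcd] at hd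
              omega
          · have hd0 : sdepth (subst σh b) = 0 := by omega
            have hm0 : Moveless (subst σh b) := moveless_of_sdepth hd0
            have hmb : Moveless (subst σ b) := ext_moveless hp (ExtP.base b) hm0
            have hbV₁ : Bisim V₁ (pow α (M-1)) :=
              (bisim_par_movelessR hm0).symm.trans hV
            obtain ⟨s', h1, h2, h3⟩ := iha (by omega) h hbV₁
            exact ⟨s', SmP.fL hmb h1, h2, h3⟩
      | fComm hβ h1 h2 => exact absurd rfl hα

/-- Detection for the pump `c = ᾱ.α^M`, non-τ labels: a deep move bisimilar to `α^M`
must be the pump firing at a clean live position of the pumped variable. -/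
lemma detectB' {α : ActF} (hα : α ≠ .tau) {σ σh : ℕ → Tm} {y : ℕ}
    {N B M K Tb : ℕ}
    (hp : IsPump σ σh y (.pre α.co (pow α M)))
    (hB : ∀ z, sdepth (σ z) ≤ B)
    (hKb : ∀ s ≤ N, (s+1)*(s+1)*(B+2) ≤ K)
    (hTb : ∀ s ≤ N, (s+1)*(B+1) ≤ Tb)
    (hbig : 2*K + Tb + B + 2 < M) :
    ∀ {w : Tm}, size w ≤ N → ∀ {lam : ActF} {V : Tm}, lam ≠ .tau →
      Step (subst σh w) lam V → Bisim V (pow α M) →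
      lam = α.co ∧ Unw σ (.var y) w := by
  have hcd : sdepth (.pre α.co (pow α M)) = M + 1 := by
    show sdepth (pow α M) + 1 = M + 1
    rw [sdepth_pow]
  have hBc : B ≤ sdepth (.pre α.co (pow α M)) := by rw [hcd]; omega
  have hDc : ∀ μ q, Step (.pre α.co (pow α M)) μ q → M ≤ sdepth q := by
    intro μ q h
    obtain ⟨_, rfl⟩ := step_pre_inv h
    rw [sdepth_pow]
  have hDcc : M ≤ sdepth (.pre α.co (pow α M)) := by rw [hcd]; omega
  intro w
  induction w with
  | nil => intro _ lam V _ h _; cases h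
  | var z =>
      intro _ lam V hlam h hV
      have hsV : sdepth V = M := by rw [bisim_sdepth hV, sdepth_pow]
      have h' : Step (σh z) lam V := h
      rcases hp z with he | ⟨rfl, he⟩
      · rw [he] at h'
        have h1 := step_sdepth_lt h'
        have h2 := hB z
        omega
      · rw [he] at h'
        cases h' with
        | plusL h2 =>
            have h3 := step_sdepth_lt h2
            have h4 := hB z
            omega
        | plusR h2 =>
            obtain ⟨h3, rfl⟩ := step_pre_inv h2
            exact ⟨h3, Unw.base⟩
  | pre ν body ih =>
      intro hsz lam V hlam h hV
      obtain ⟨hν, rfl⟩ := step_pre_inv h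
      have hsV : sdepth (subst σh body) = M := by rw [bisim_sdepth hV, sdepth_pow]
      have e : size (Tm.pre ν body) = 1 + size body := rfl
      rcases dich hp hB hBc body with hd | hd
      · have h2 := le_trans hd (hTb (size body) (by omega))
        omega
      · rw [hcd] at hd
        omega
  | plus a b iha ihb =>
      intro hsz lam V hlam h hV
      have e : size (Tm.plus a b) = 1 + size a + size b := rfl
      cases h with
      | plusL h =>
          obtain ⟨h1, h2⟩ := iha (by omega) hlam h hV
          exact ⟨h1, Unw.plusL h2⟩
      | plusR h =>
          obtain ⟨h1, h2⟩ := ihb (by omega) hlam h hV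
          exact ⟨h1, Unw.plusR h2⟩
  | par a b iha ihb =>
      intro hsz lam V hlam h hV
      have e : size (Tm.par a b) = 1 + size a + size b := rfl
      have hsV : sdepth V = M := by rw [bisim_sdepth hV, sdepth_pow]
      cases h with
      | parL h =>
          rename_i V₁
          have hsum : sdepth V₁ + sdepth (subst σh b) = M := hsV
          rcases gap hp hB hBc hDc hDcc h with hg | hg
          · exfalso
            have h1 := le_trans hg (hKb (size a) (by omega))
            rcases dich hp hB hBc b with hd | hd
            · have h2 := le_trans hd (hTb (size b) (by omega))
              omega
            · rw [hcd] at hd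
              omega
          · have hd0 : sdepth (subst σh b) = 0 := by omega
            have hm0 : Moveless (subst σh b) := moveless_of_sdepth hd0
            have hmb : Moveless (subst σ b) := ext_moveless hp (ExtP.base b) hm0
            have hbV₁ : Bisim V₁ (pow α M) := (bisim_par_movelessR hm0).symm.trans hV
            obtain ⟨h1, h2⟩ := iha (by omega) hlam h hbV₁
            exact ⟨h1, Unw.parL hmb h2⟩
      | parR h =>
          rename_i V₂
          have hsum : sdepth (subst σh a) + sdepth V₂ = M := hsV
          rcases gap hp hB hBc hDc hDcc h with hg | hg
          · exfalso
            have h1 := le_trans hg (hKb (size b) (by omega))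
            rcases dich hp hB hBc a with hd | hd
            · have h2 := le_trans hd (hTb (size a) (by omega))
              omega
            · rw [hcd] at hd
              omega
          · have hd0 : sdepth (subst σh a) = 0 := by omega
            have hm0 : Moveless (subst σh a) := moveless_of_sdepth hd0
            have hma : Moveless (subst σ a) := ext_moveless hp (ExtP.base a) hm0
            have hbV₂ : Bisim V₂ (pow α M) := (bisim_par_movelessL hm0).symm.trans hV
            obtain ⟨h1, h2⟩ := ihb (by omega) hlam h hbV₂
            exact ⟨h1, Unw.parR hma h2⟩
      | comm hβ h1 h2 => exact absurd rfl hlam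
  | f a b iha ihb =>
      intro hsz lam V hlam h hV
      have e : size (Tm.f a b) = 1 + size a + size b := rfl
      have hsV : sdepth V = M := by rw [bisim_sdepth hV, sdepth_pow]
      cases h with
      | fL h =>
          rename_i V₁
          have hsum : sdepth V₁ + sdepth (subst σh b) = M := hsV
          rcases gap hp hB hBc hDc hDcc h with hg | hg
          · exfalso
            have h1 := le_trans hg (hKb (size a) (by omega))
            rcases dich hp hB hBc b with hd | hd
            · have h2 := le_trans hd (hTb (size b) (by omega))
              omega
            · rw [hcd] at hd
              omega
          · have hd0 : sdepth (subst σh b) = 0 := by omega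
            have hm0 : Moveless (subst σh b) := moveless_of_sdepth hd0
            have hmb : Moveless (subst σ b) := ext_moveless hp (ExtP.base b) hm0
            have hbV₁ : Bisim V₁ (pow α M) := (bisim_par_movelessR hm0).symm.trans hV
            obtain ⟨h1, h2⟩ := iha (by omega) hlam h hbV₁
            exact ⟨h1, Unw.fL hmb h2⟩
      | fComm hβ h1 h2 => exact absurd rfl hlam

/-- Detection for the pump `c = ᾱ.α^M`, label τ: either the term has an `ᾱ`-move
(under `σ`), or it has a semantic summand `f P Q` with an `α`-move of `P` and live `Q`. -/
lemma detectB {α : ActF} (hα : α ≠ .tau) {σ σh : ℕ → Tm} {y : ℕ}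
    {N B M K Tb : ℕ}
    (hp : IsPump σ σh y (.pre α.co (pow α M)))
    (hB : ∀ z, sdepth (σ z) ≤ B)
    (hKb : ∀ s ≤ N, (s+1)*(s+1)*(B+2) ≤ K)
    (hTb : ∀ s ≤ N, (s+1)*(B+1) ≤ Tb)
    (hbig : 2*K + Tb + B + 2 < M)
    {d₀ : Tm} (hyco : Step (σ y) α.co d₀) :
    ∀ {w : Tm}, size w ≤ N → ∀ {V : Tm}, Step (subst σh w) .tau V →
      Bisim V (pow α M) →
      (∃ s', SmP (subst σ w) s' ∧
        ∃ P Q, s' = .f P Q ∧ (∃ A, Step P α A) ∧ ¬ Moveless Q) ∨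
      (∃ q, Step (subst σ w) α.co q) := by
  have hcd : sdepth (.pre α.co (pow α M)) = M + 1 := by
    show sdepth (pow α M) + 1 = M + 1
    rw [sdepth_pow]
  have hBc : B ≤ sdepth (.pre α.co (pow α M)) := by rw [hcd]; omega
  have hDc : ∀ μ q, Step (.pre α.co (pow α M)) μ q → M ≤ sdepth q := by
    intro μ q h
    obtain ⟨_, rfl⟩ := step_pre_inv h
    rw [sdepth_pow]
  have hDcc : M ≤ sdepth (.pre α.co (pow α M)) := by rw [hcd]; omega
  have hlive : ¬ Moveless (σ y) := fun hm => hm _ _ hyco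
  intro w
  induction w with
  | nil => intro _ V h _; cases h
  | var z =>
      intro _ V h hV
      have hsV : sdepth V = M := by rw [bisim_sdepth hV, sdepth_pow]
      have h' : Step (σh z) .tau V := h
      rcases hp z with he | ⟨rfl, he⟩
      · rw [he] at h'
        have h1 := step_sdepth_lt h'
        have h2 := hB z
        omega
      · rw [he] at h'
        cases h' with
        | plusL h2 =>
            have h3 := step_sdepth_lt h2
            have h4 := hB z
            omega
        | plusR h2 =>
            obtain ⟨h3, _⟩ := step_pre_inv h2
            exact absurd h3.symm (co_ne_tau hα)
  | pre ν body ih =>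
      intro hsz V h hV
      obtain ⟨hν, rfl⟩ := step_pre_inv h
      have hsV : sdepth (subst σh body) = M := by rw [bisim_sdepth hV, sdepth_pow]
      have e : size (Tm.pre ν body) = 1 + size body := rfl
      rcases dich hp hB hBc body with hd | hd
      · have h2 := le_trans hd (hTb (size body) (by omega))
        omega
      · rw [hcd] at hd
        omega
  | plus a b iha ihb =>
      intro hsz V h hV
      have e : size (Tm.plus a b) = 1 + size a + size b := rfl
      cases h with
      | plusL h =>
          rcases iha (by omega) h hV with ⟨s', h1, h2⟩ | ⟨q, hq⟩
          · exact Or.inl ⟨s', SmP.plusL h1, h2⟩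
          · exact Or.inr ⟨q, Step.plusL hq⟩
      | plusR h =>
          rcases ihb (by omega) h hV with ⟨s', h1, h2⟩ | ⟨q, hq⟩
          · exact Or.inl ⟨s', SmP.plusR h1, h2⟩
          · exact Or.inr ⟨q, Step.plusR hq⟩
  | par a b iha ihb =>
      intro hsz V h hV
      have e : size (Tm.par a b) = 1 + size a + size b := rfl
      have hsV : sdepth V = M := by rw [bisim_sdepth hV, sdepth_pow]
      cases h with
      | parL h =>
          rename_i V₁
          have hsum : sdepth V₁ + sdepth (subst σh b) = M := hsV
          rcases gap hp hB hBc hDc hDcc h with hg | hg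
          · exfalso
            have h1 := le_trans hg (hKb (size a) (by omega))
            rcases dich hp hB hBc b with hd | hd
            · have h2 := le_trans hd (hTb (size b) (by omega))
              omega
            · rw [hcd] at hd
              omega
          · have hd0 : sdepth (subst σh b) = 0 := by omega
            have hm0 : Moveless (subst σh b) := moveless_of_sdepth hd0
            have hmb : Moveless (subst σ b) := ext_moveless hp (ExtP.base b) hm0
            have hbV₁ : Bisim V₁ (pow α M) := (bisim_par_movelessR hm0).symm.trans hV
            rcases iha (by omega) h hbV₁ with ⟨s', h1, h2⟩ | ⟨q, hq⟩
            · exact Or.inl ⟨s', SmP.parL hmb h1, h2⟩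
            · exact Or.inr ⟨.par q (subst σ b), Step.parL hq⟩
      | parR h =>
          rename_i V₂
          have hsum : sdepth (subst σh a) + sdepth V₂ = M := hsV
          rcases gap hp hB hBc hDc hDcc h with hg | hg
          · exfalso
            have h1 := le_trans hg (hKb (size b) (by omega))
            rcases dich hp hB hBc a with hd | hd
            · have h2 := le_trans hd (hTb (size a) (by omega))
              omega
            · rw [hcd] at hd
              omega
          · have hd0 : sdepth (subst σh a) = 0 := by omega
            have hm0 : Moveless (subst σh a) := moveless_of_sdepth hd0
            have hma : Moveless (subst σ a) := ext_moveless hp (ExtP.base a) hm0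
            have hbV₂ : Bisim V₂ (pow α M) := (bisim_par_movelessL hm0).symm.trans hV
            rcases ihb (by omega) h hbV₂ with ⟨s', h1, h2⟩ | ⟨q, hq⟩
            · exact Or.inl ⟨s', SmP.parR hma h1, h2⟩
            · exact Or.inr ⟨.par (subst σ a) q, Step.parR hq⟩
      | comm hβ h1 h2 =>
          rename_i V₁ V₂ β
          have hsum : sdepth V₁ + sdepth V₂ = M := hsV
          rcases gap hp hB hBc hDc hDcc h1 with hg1 | hg1 <;>
            rcases gap hp hB hBc hDc hDcc h2 with hg2 | hg2
          · exfalso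
            have ha1 := le_trans hg1 (hKb (size a) (by omega))
            have ha2 := le_trans hg2 (hKb (size b) (by omega))
            omega
          · -- V₂ deep
            have hd0 : sdepth V₁ = 0 := by omega
            have hbV₂ : Bisim V₂ (pow α M) :=
              (bisim_par_movelessL (moveless_of_sdepth hd0)).symm.trans hV
            obtain ⟨hco, hUnw⟩ := detectB' hα hp hB hKb hTb hbig (by omega : size b ≤ N)
              (co_ne_tau hβ) h2 hbV₂
            obtain ⟨D, hD, _⟩ := Unw_lift hUnw (show Step (subst σ (.var y)) α.co d₀ from hyco)
            exact Or.inr ⟨.par (subst σ a) D, Step.parR hD⟩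
          · -- V₁ deep
            have hd0 : sdepth V₂ = 0 := by omega
            have hbV₁ : Bisim V₁ (pow α M) :=
              (bisim_par_movelessR (moveless_of_sdepth hd0)).symm.trans hV
            obtain ⟨hco, hUnw⟩ := detectB' hα hp hB hKb hTb hbig (by omega : size a ≤ N)
              hβ h1 hbV₁
            obtain ⟨D, hD, _⟩ := Unw_lift hUnw (show Step (subst σ (.var y)) α.co d₀ from hyco)
            exact Or.inr ⟨.par D (subst σ b), Step.parL hD⟩
          · exfalso
            omega
  | f a b iha ihb =>
      intro hsz V h hV
      have e : size (Tm.f a b) = 1 + size a + size b := rfl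
      have hsV : sdepth V = M := by rw [bisim_sdepth hV, sdepth_pow]
      cases h with
      | fL h =>
          rename_i V₁
          have hsum : sdepth V₁ + sdepth (subst σh b) = M := hsV
          rcases gap hp hB hBc hDc hDcc h with hg | hg
          · exfalso
            have h1 := le_trans hg (hKb (size a) (by omega))
            rcases dich hp hB hBc b with hd | hd
            · have h2 := le_trans hd (hTb (size b) (by omega))
              omega
            · rw [hcd] at hd
              omega
          · have hd0 : sdepth (subst σh b) = 0 := by omega
            have hm0 : Moveless (subst σh b) := moveless_of_sdepth hd0
            have hmb : Moveless (subst σ b) := ext_moveless hp (ExtP.base b) hm0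
            have hbV₁ : Bisim V₁ (pow α M) := (bisim_par_movelessR hm0).symm.trans hV
            rcases iha (by omega) h hbV₁ with ⟨s', h1, h2⟩ | ⟨q, hq⟩
            · exact Or.inl ⟨s', SmP.fL hmb h1, h2⟩
            · exact Or.inr ⟨.par q (subst σ b), Step.fL hq⟩
      | fComm hβ h1 h2 =>
          rename_i V₁ V₂ β
          have hsum : sdepth V₁ + sdepth V₂ = M := hsV
          rcases gap hp hB hBc hDc hDcc h1 with hg1 | hg1 <;>
            rcases gap hp hB hBc hDc hDcc h2 with hg2 | hg2
          · exfalso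
            have ha1 := le_trans hg1 (hKb (size a) (by omega))
            have ha2 := le_trans hg2 (hKb (size b) (by omega))
            omega
          · -- V₂ deep : the pump fired in the right argument, comm with a genuine
            -- α-move of the left argument: the `f` node is the wanted summand
            have hd0 : sdepth V₁ = 0 := by omega
            have hbV₂ : Bisim V₂ (pow α M) :=
              (bisim_par_movelessL (moveless_of_sdepth hd0)).symm.trans hV
            obtain ⟨hco, hUnw⟩ := detectB' hα hp hB hKb hTb hbig (by omega : size b ≤ N)
              (co_ne_tau hβ) h2 hbV₂
            have hβα : β = α := co_inj hα hβ hco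
            rw [hβα] at h1
            obtain ⟨A, hA, _⟩ :=
              rev_step hp rfl (Ne.symm (co_ne_self hα)) hα h1
            obtain ⟨D, hD, _⟩ := Unw_lift hUnw (show Step (subst σ (.var y)) α.co d₀ from hyco)
            refine Or.inl ⟨subst σ (Tm.f a b), SmP.refl _, subst σ a, subst σ b, rfl,
              ⟨A, hA⟩, ?_⟩
            exact fun hm => hm _ _ hD
          · -- V₁ deep : the pump fired in the left argument, giving a genuine
            -- ᾱ-move of `subst σ (f a b)` via fL
            have hd0 : sdepth V₂ = 0 := by omega
            have hbV₁ : Bisim V₁ (pow α M) :=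
              (bisim_par_movelessR (moveless_of_sdepth hd0)).symm.trans hV
            obtain ⟨hco, hUnw⟩ := detectB' hα hp hB hKb hTb hbig (by omega : size a ≤ N)
              hβ h1 hbV₁
            obtain ⟨D, hD, _⟩ := Unw_lift hUnw (show Step (subst σ (.var y)) α.co d₀ from hyco)
            exact Or.inr ⟨.par D (subst σ b), Step.fL hD⟩
          · exfalso
            omega
/-! ### Part 6: the pigeonhole argument -/

def subtmList : Tm → List Tm
  | .nil => [.nil]
  | .var x => [.var x]
  | .pre ν t => .pre ν t :: subtmList t
  | .plus t u => .plus t u :: (subtmList t ++ subtmList u)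
  | .par t u => .par t u :: (subtmList t ++ subtmList u)
  | .f t u => .f t u :: (subtmList t ++ subtmList u)

lemma length_subtmList : ∀ w : Tm, (subtmList w).length ≤ 2 * size w + 1 := by
  intro w
  induction w with
  | nil => simp [subtmList, size]
  | var x => simp [subtmList, size]
  | pre ν t ih =>
      simp only [subtmList, List.length_cons, size]
      omega
  | plus a b iha ihb =>
      simp only [subtmList, List.length_cons, List.length_append, size]
      omega
  | par a b iha ihb =>
      simp only [subtmList, List.length_cons, List.length_append, size]
      omega
  | f a b iha ihb =>
      simp only [subtmList, List.length_cons, List.length_append, size]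
      omega

lemma self_mem_subtmList : ∀ w : Tm, w ∈ subtmList w := by
  intro w
  cases w <;> simp [subtmList]

lemma pig_step {α : ActF} (hα : α ≠ .tau) {σ : ℕ → Tm} :
    ∀ {w : Tm} {j : ℕ}, 1 ≤ j → ∀ {lam : ActF} {D : Tm}, lam = α.co →
      Step (subst σ w) lam D → Bisim D (upTo α j) →
      (∃ y, Unw σ (.var y) w ∧ ∃ d₀, Step (σ y) α.co d₀) ∨
      (∃ w' ∈ subtmList w, Bisim (subst σ w') (upTo α j)) := by
  intro w
  induction w with
  | nil => intro j hj lam D hlam h hD; cases h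
  | var z =>
      intro j hj lam D hlam h hD
      subst hlam
      exact Or.inl ⟨z, Unw.base, D, h⟩
  | pre ν body ih =>
      intro j hj lam D hlam h hD
      obtain ⟨hν, rfl⟩ := step_pre_inv h
      exact Or.inr ⟨body, by simp [subtmList, self_mem_subtmList], hD⟩
  | plus a b iha ihb =>
      intro j hj lam D hlam h hD
      cases h with
      | plusL h =>
          rcases iha hj hlam h hD with ⟨y, hu, hy⟩ | ⟨w', hw', hb⟩
          · exact Or.inl ⟨y, Unw.plusL hu, hy⟩
          · exact Or.inr ⟨w', by simp [subtmList]; tauto, hb⟩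
      | plusR h =>
          rcases ihb hj hlam h hD with ⟨y, hu, hy⟩ | ⟨w', hw', hb⟩
          · exact Or.inl ⟨y, Unw.plusR hu, hy⟩
          · exact Or.inr ⟨w', by simp [subtmList]; tauto, hb⟩
  | par a b iha ihb =>
      intro j hj lam D hlam h hD
      cases h with
      | parL h =>
          rename_i D₁
          rcases upTo_prime hα hj hD with hm | hm
          · -- D₁ moveless : the partner carries the class
            have hb2 : Bisim (subst σ b) (upTo α j) := (bisim_par_movelessL hm).symm.trans hD
            exact Or.inr ⟨b, by simp [subtmList, self_mem_subtmList], hb2⟩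
          · -- partner moveless : recurse
            have hb1 : Bisim D₁ (upTo α j) := (bisim_par_movelessR hm).symm.trans hD
            rcases iha hj hlam h hb1 with ⟨y, hu, hy⟩ | ⟨w', hw', hb⟩
            · exact Or.inl ⟨y, Unw.parL hm hu, hy⟩
            · exact Or.inr ⟨w', by simp [subtmList]; tauto, hb⟩
      | parR h =>
          rename_i D₂
          rcases upTo_prime hα hj hD with hm | hm
          · have hb1 : Bisim D₂ (upTo α j) := (bisim_par_movelessL hm).symm.trans hD
            rcases ihb hj hlam h hb1 with ⟨y, hu, hy⟩ | ⟨w', hw', hb⟩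
            · exact Or.inl ⟨y, Unw.parR hm hu, hy⟩
            · exact Or.inr ⟨w', by simp [subtmList]; tauto, hb⟩
          · have hb2 : Bisim (subst σ a) (upTo α j) := (bisim_par_movelessR hm).symm.trans hD
            exact Or.inr ⟨a, by simp [subtmList, self_mem_subtmList], hb2⟩
      | comm hβ h1 h2 =>
          exact absurd hlam (co_ne_tau hα).symm
  | f a b iha ihb =>
      intro j hj lam D hlam h hD
      cases h with
      | fL h =>
          rename_i D₁
          rcases upTo_prime hα hj hD with hm | hm
          · have hb2 : Bisim (subst σ b) (upTo α j) := (bisim_par_movelessL hm).symm.trans hD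
            exact Or.inr ⟨b, by simp [subtmList, self_mem_subtmList], hb2⟩
          · have hb1 : Bisim D₁ (upTo α j) := (bisim_par_movelessR hm).symm.trans hD
            rcases iha hj hlam h hb1 with ⟨y, hu, hy⟩ | ⟨w', hw', hb⟩
            · exact Or.inl ⟨y, Unw.fL hm hu, hy⟩
            · exact Or.inr ⟨w', by simp [subtmList]; tauto, hb⟩
      | fComm hβ h1 h2 =>
          exact absurd hlam (co_ne_tau hα).symm

lemma bisim_upTo_inj {α : ActF} {i j : ℕ} (h : Bisim (upTo α i) (upTo α j)) : i = j := by
  have := bisim_sdepth h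
  rwa [sdepth_upTo, sdepth_upTo] at this

/-- The pigeonhole: if `σ t₂ ∼ p_n` with `n` large relative to `t₂`, some variable of
`t₂` at an unwrap position contributes an `ᾱ`-move. -/
lemma pigeonhole {α : ActF} (hα : α ≠ .tau) {n : ℕ} {σ : ℕ → Tm} {t₂ : Tm}
    (hsize : 2 * size t₂ + 2 < n) (hQ : Bisim (subst σ t₂) (pN α n)) :
    ∃ y, Unw σ (.var y) t₂ ∧ ∃ d₀, Step (σ y) α.co d₀ := by
  by_contra hno
  have hall : ∀ j : ℕ, ∃ w', 1 ≤ j ∧ j ≤ n →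
      w' ∈ subtmList t₂ ∧ Bisim (subst σ w') (upTo α j) := by
    intro j
    by_cases hj : 1 ≤ j ∧ j ≤ n
    · obtain ⟨D, hD, hbD⟩ := hQ.symm.step (pN_step hj.2)
      rcases pig_step hα hj.1 rfl hD hbD.symm with hy | ⟨w', hw', hb⟩
      · exact absurd hy hno
      · exact ⟨w', fun _ => ⟨hw', hb⟩⟩
    · exact ⟨.nil, fun h => absurd h hj⟩
  choose g hg using hall
  have hinj : Set.InjOn g ((Finset.Icc 1 n : Finset ℕ) : Set ℕ) := by
    intro i hi j hj hij
    simp only [Finset.coe_Icc, Set.mem_Icc] at hi hj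
    have h1 := (hg i hi).2
    have h2 := (hg j hj).2
    rw [hij] at h1
    exact bisim_upTo_inj (h1.symm.trans h2)
  have hcard := Finset.card_le_card_of_injOn g
    (fun j hj => List.mem_toFinset.2 (hg j (Finset.mem_Icc.1 hj)).1) hinj
  have h1 : (Finset.Icc 1 n).card = n := by simp
  have h2 : (subtmList t₂).toFinset.card ≤ (subtmList t₂).length :=
    (subtmList t₂).toFinset_card_le
  have h3 := length_subtmList t₂
  omega
/-! ### Part 7: the transfer lemma for sound equations -/

lemma closed_pow {α : ActF} : ∀ m, Closed (pow α m) := by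
  intro m
  induction m with
  | zero => trivial
  | succ m ih => exact ih

lemma derivSound {E : Set Eqn} (hE : SystemSound Bisim E) {t u : Tm} (h : Deriv E t u) :
    ∀ σ, ClosedSubst σ → Bisim (subst σ t) (subst σ u) := by
  induction h with
  | ax ρ hmem =>
      intro σ hσ
      rw [subst_comp, subst_comp]
      exact hE _ hmem _ (closedSubst_comp hσ ρ)
  | refl t => exact fun σ _ => Bisim.refl _
  | symm h ih => exact fun σ hσ => (ih σ hσ).symm
  | trans h1 h2 ih1 ih2 => exact fun σ hσ => (ih1 σ hσ).trans (ih2 σ hσ)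
  | pre μ h ih => exact fun σ hσ => bisim_pre μ (ih σ hσ)
  | plus h1 h2 ih1 ih2 => exact fun σ hσ => bisim_plus (ih1 σ hσ) (ih2 σ hσ)
  | par h1 h2 ih1 ih2 => exact fun σ hσ => bisim_par (ih1 σ hσ) (ih2 σ hσ)
  | f h1 h2 ih1 ih2 => exact fun σ hσ => bisim_f (ih1 σ hσ) (ih2 σ hσ)

lemma le_foldr_max {l : List ℕ} {f : ℕ → ℕ} {a : ℕ} (h : a ∈ l) :
    f a ≤ (l.map f).foldr max 0 := by
  induction l with
  | nil => cases h
  | cons b l ih =>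
      simp only [List.map_cons, List.foldr_cons]
      rcases List.mem_cons.1 h with rfl | h2
      · exact le_max_left _ _
      · exact le_trans (ih h2) (le_max_right _ _)

lemma Unw_size {σ : ℕ → Tm} {w₀ w : Tm} (h : Unw σ w₀ w) : size w₀ ≤ size w := by
  induction h with
  | base => exact le_rfl
  | plusL h ih => show _ ≤ 1 + _ + _ ; omega
  | plusR h ih => show _ ≤ 1 + _ + _ ; omega
  | parL hm h ih => show _ ≤ 1 + _ + _ ; omega
  | parR hm h ih => show _ ≤ 1 + _ + _ ; omega
  | fL hm h ih => show _ ≤ 1 + _ + _ ; omega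

/-- The central transfer lemma: along a sound equation of small size, under a closed
substitution, a dominated instance with the `Phi` witness transfers `Phi` across. -/
lemma transfer {α : ActF} (hα : α ≠ .tau) {n N : ℕ} {t u : Tm}
    (hsound : ∀ ρ, ClosedSubst ρ → Bisim (subst ρ t) (subst ρ u))
    (ht : size t ≤ N) (hu : size u ≤ N) (hn : 2 * N + 2 < n)
    {σ : ℕ → Tm} (hσ : ClosedSubst σ)
    (hDom : DomG α n (subst σ t)) (hPhi : PhiG α n (subst σ t)) :
    PhiG α n (subst σ u) := by
  have hn1 : 1 ≤ n := by omega
  -- pass to a substitution with globally bounded depth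
  obtain ⟨σ2, hσ2⟩ : ∃ σ2 : ℕ → Tm,
      σ2 = fun z => if z ∈ varOcc t ++ varOcc u then σ z else Tm.nil := ⟨_, rfl⟩
  have he_t : subst σ2 t = subst σ t := subst_congr (fun z hz => by
    rw [hσ2]; simp only []; rw [if_pos (List.mem_append_left _ hz)])
  have he_u : subst σ2 u = subst σ u := subst_congr (fun z hz => by
    rw [hσ2]; simp only []; rw [if_pos (List.mem_append_right _ hz)])
  have hσ2c : ClosedSubst σ2 := by
    intro z
    rw [hσ2]; simp only []
    by_cases hz : z ∈ varOcc t ++ varOcc u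
    · rw [if_pos hz]; exact hσ z
    · rw [if_neg hz]; trivial
  rw [← he_u]
  rw [← he_t] at hDom hPhi
  obtain ⟨B, hB⟩ : ∃ B, ∀ z, sdepth (σ2 z) ≤ B := by
    refine ⟨((varOcc t ++ varOcc u).map (fun z => sdepth (σ2 z))).foldr max 0, ?_⟩
    intro z
    by_cases hz : z ∈ varOcc t ++ varOcc u
    · exact le_foldr_max (f := fun z => sdepth (σ2 z)) hz
    · rw [hσ2]; simp only []; rw [if_neg hz]
      show sdepth Tm.nil ≤ _
      simp [sdepth]
  obtain ⟨K, hKdef⟩ : ∃ K, K = (N+1)*(N+1)*(B+2) := ⟨_, rfl⟩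
  obtain ⟨Tb, hTbdef⟩ : ∃ T, T = (N+1)*(B+1) := ⟨_, rfl⟩
  have hKb : ∀ s ≤ N, (s+1)*(s+1)*(B+2) ≤ K := by
    intro s hs; rw [hKdef]
    exact Nat.mul_le_mul (Nat.mul_le_mul (by omega) (by omega)) le_rfl
  have hTbb : ∀ s ≤ N, (s+1)*(B+1) ≤ Tb := by
    intro s hs; rw [hTbdef]; exact Nat.mul_le_mul (by omega) le_rfl
  obtain ⟨Mk, hMkdef⟩ : ∃ m : ℕ, m = 2*K + Tb + B + 2 := ⟨_, rfl⟩
  -- the instance of `t` is bisimilar to G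
  have hGt : Bisim (subst σ2 t) (epsLhs α n) := bisim_G_of_phi_dom hα hPhi hDom
  have hsound2 : Bisim (subst σ2 t) (subst σ2 u) := by
    rw [he_t, he_u]; exact hsound σ hσ
  have hDomU : DomG α n (subst σ2 u) := dom_transport hsound2 hDom
  -- extract the witness structure
  obtain ⟨s, hSm, hsA, hsG⟩ := hPhi
  rcases extraction hα hSm hsA hsG with ⟨x, hUnw, hs⟩ | ⟨t₁, t₂, hUnw, hseq⟩
  · -- Case (a): the witness sits inside `σ2 x`, with `x` at an unwrap position
    obtain ⟨σh, hσhdef⟩ : ∃ σh : ℕ → Tm,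
        σh = fun z => if z = x then Tm.plus (σ2 z) (pow α (Mk+1)) else σ2 z := ⟨_, rfl⟩
    have hp : IsPump σ2 σh x (pow α (Mk+1)) := by
      intro z
      rw [hσhdef]; simp only []
      by_cases hz : z = x
      · right; exact ⟨hz, by rw [if_pos hz]⟩
      · left; rw [if_neg hz]
    have hσhc : ClosedSubst σh := by
      intro z
      rw [hσhdef]; simp only []
      by_cases hz : z = x
      · rw [if_pos hz]; exact ⟨hσ2c z, closed_pow _⟩
      · rw [if_neg hz]; exact hσ2c z
    have hlive : ¬ Moveless (σ2 x) := by
      intro hm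
      obtain ⟨v, hv, _⟩ := (rich_of_bisim_G hα hsG).1
      obtain ⟨D, hD, _⟩ := SmP_lift hs hv
      exact hm _ _ hD
    -- the deep α-move of the pumped instance of t
    have hstepx : Step (subst σh (.var x)) α (pow α Mk) := by
      show Step (σh x) α (pow α Mk)
      rw [hσhdef]; simp only [if_pos rfl]
      exact Step.plusR (pow_step Mk)
    obtain ⟨Vt, hVt, hbVt⟩ := Unw_lift (Unw_pump hp hlive hUnw) hstepx
    -- transfer it to u
    obtain ⟨V, hV, hbV⟩ := (hsound σh hσhc).step hVt
    have hbV' : Bisim V (pow α ((Mk+1)-1)) := hbV.symm.trans hbVt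
    obtain ⟨s', h1, h2, h3⟩ := detectA hα hp hB hKb hTbb (by omega) hs hsA hsG hu hV hbV'
    exact ⟨s', h1, h2, h3⟩
  · -- Case (b): the witness is an f-node
    subst hseq
    have hQlive : ¬ Moveless (subst σ2 t₂) := hsA
    obtain ⟨⟨A, hPA, hmA⟩, hAll, hQpN⟩ := f_rigidity hα hn1 hQlive hsG
    have hszt₂ : size t₂ ≤ N := by
      have h1 := Unw_size hUnw
      have e : size (Tm.f t₁ t₂) = 1 + size t₁ + size t₂ := rfl
      omega
    obtain ⟨y, hUy, d₀, hyco⟩ := pigeonhole hα (by omega) hQpN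
    obtain ⟨σh, hσhdef⟩ : ∃ σh : ℕ → Tm,
        σh = fun z => if z = y then Tm.plus (σ2 z) (.pre α.co (pow α (Mk+1))) else σ2 z :=
      ⟨_, rfl⟩
    have hp : IsPump σ2 σh y (.pre α.co (pow α (Mk+1))) := by
      intro z
      rw [hσhdef]; simp only []
      by_cases hz : z = y
      · right; exact ⟨hz, by rw [if_pos hz]⟩
      · left; rw [if_neg hz]
    have hσhc : ClosedSubst σh := by
      intro z
      rw [hσhdef]; simp only []
      by_cases hz : z = y
      · rw [if_pos hz]; exact ⟨hσ2c z, closed_pow _⟩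
      · rw [if_neg hz]; exact hσ2c z
    have hliveY : ¬ Moveless (σ2 y) := fun hm => hm _ _ hyco
    -- left leg: a genuine α-move of the pumped left argument, with moveless target
    obtain ⟨Ah, hAh, heA⟩ := mono_ext hp hPA
    have hmAh : Moveless Ah := MLE hp hliveY heA hmA
    -- right leg: the pump fires
    have hstepy : Step (subst σh (.var y)) α.co (pow α (Mk+1)) := by
      show Step (σh y) α.co (pow α (Mk+1))
      rw [hσhdef]; simp only [if_pos rfl]
      exact Step.plusR (Step.pre _ _)
    obtain ⟨Dh, hDh, hbDh⟩ := Unw_lift (Unw_pump hp hliveY hUy) hstepy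
    -- the deep τ-move of the f node, lifted to t
    have hnode : Step (subst σh (.f t₁ t₂)) .tau (.par Ah Dh) :=
      Step.fComm hα hAh hDh
    have hbnode : Bisim (.par Ah Dh) (pow α (Mk+1)) :=
      (bisim_par_movelessL hmAh).trans hbDh
    obtain ⟨Vt, hVt, hbVt⟩ := Unw_lift (Unw_pump hp hliveY hUnw) hnode
    obtain ⟨V, hV, hbV⟩ := (hsound σh hσhc).step hVt
    have hbV' : Bisim V (pow α (Mk+1)) := hbV.symm.trans (hbVt.trans hbnode)
    rcases detectB hα hp hB hKb hTbb (by omega) hyco hu hV hbV' with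
      ⟨s', hSm', P, Q', hseq', ⟨A', hA'⟩, hQ'live⟩ | ⟨q, hq⟩
    · -- assemble the witness on the u side
      subst hseq'
      have hDs' : DomG α n (.f P Q') := dom_SmP hSm' hDomU
      have hfa : Step (.f P Q') α (.par A' Q') := Step.fL hA'
      have hbPQ : Bisim (.par A' Q') (pN α n) := by
        rcases dom_classify hDs' hfa with ⟨_, hb⟩ | ⟨hc, _⟩
        · exact hb
        · exact absurd hc hα
      have hmA' : Moveless A' := by
        intro μ₀ v₀ h₀
        have hex : ∃ ν₀ q₀, Step Q' ν₀ q₀ := by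
          by_contra hc
          push_neg at hc
          exact hQ'live hc
        obtain ⟨ν₀, q₀, hq₀⟩ := hex
        obtain ⟨w1, hw1, hb1⟩ := hbPQ.step (Step.parR hq₀)
        obtain ⟨hν₀, i1, hi1, _⟩ := step_pN hw1
        obtain ⟨w2, hw2, hb2⟩ := hbPQ.step (Step.parL h₀)
        obtain ⟨hμ₀, i2, hi2, rfl⟩ := step_pN hw2
        obtain ⟨w3, hw3, _⟩ := hb2.step (Step.parR hq₀)
        obtain ⟨hlab, _⟩ := step_upTo hw3
        exact co_ne_self hα (hν₀.symm.trans hlab)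
      have hQ'pN : Bisim Q' (pN α n) := (bisim_par_movelessL hmA').symm.trans hbPQ
      have hrich : RichG α n (.f P Q') := by
        constructor
        · exact ⟨.par A' Q', hfa, hbPQ⟩
        · intro i hi
          obtain ⟨Di, hDi, hbDi⟩ := hQ'pN.symm.step (pN_step hi)
          refine ⟨.par A' Di, Step.fComm hα hA' hDi, ?_⟩
          exact (bisim_par_movelessL hmA').trans hbDi.symm
      have hG' : Bisim (.f P Q') (epsLhs α n) := bisim_G_of_dom_rich hDs' hrich
      exact ⟨.f P Q', hSm', hQ'live, hG'⟩
    · exact absurd hq (fun h => dom_no_co hα hDomU h)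
/-! ### Part 8: the invariant along derivations -/

lemma INV {α : ActF} (hα : α ≠ .tau) {n N : ℕ} {E : Set Eqn}
    (hE : SystemSound Bisim E)
    (hsizes : ∀ e ∈ E, size e.1 ≤ N ∧ size e.2 ≤ N) (hn : 2 * N + 2 < n) :
    ∀ {p q : Tm}, Deriv E p q → ∀ σ, ClosedSubst σ → DomG α n (subst σ p) →
      (PhiG α n (subst σ p) ↔ PhiG α n (subst σ q)) := by
  intro p q h
  induction h with
  | ax ρ hmem =>
      rename_i t u
      intro σ hσ hD
      rw [subst_comp σ ρ t] at hD
      rw [subst_comp σ ρ t, subst_comp σ ρ u]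
      have hσρ := closedSubst_comp hσ ρ
      have hsound_tu : ∀ ρ', ClosedSubst ρ' → Bisim (subst ρ' t) (subst ρ' u) :=
        fun ρ' hρ' => hE _ hmem ρ' hρ'
      constructor
      · intro hφ
        exact transfer hα hsound_tu (hsizes _ hmem).1 (hsizes _ hmem).2 hn hσρ hD hφ
      · intro hφ
        have hD' := dom_transport (hsound_tu _ hσρ) hD
        exact transfer hα (fun ρ' hρ' => (hsound_tu ρ' hρ').symm)
          (hsizes _ hmem).2 (hsizes _ hmem).1 hn hσρ hD' hφ
  | refl t => exact fun σ hσ hD => Iff.rfl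
  | symm h ih =>
      intro σ hσ hD
      have hb := derivSound hE h σ hσ
      exact (ih σ hσ (dom_transport hb.symm hD)).symm
  | trans h1 h2 ih1 ih2 =>
      intro σ hσ hD
      exact (ih1 σ hσ hD).trans (ih2 σ hσ (dom_transport (derivSound hE h1 σ hσ) hD))
  | pre μ h ih =>
      intro σ hσ hD
      exact iff_of_false (phi_pre hα) (phi_pre hα)
  | plus h1 h2 ih1 ih2 =>
      rename_i t u t' u'
      intro σ hσ hD
      have hDa : DomG α n (subst σ t) := fun μ v hs => hD μ v (Step.plusL hs)
      have hDb : DomG α n (subst σ t') := fun μ v hs => hD μ v (Step.plusR hs)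
      show PhiG α n (.plus (subst σ t) (subst σ t')) ↔
        PhiG α n (.plus (subst σ u) (subst σ u'))
      rw [phi_plus, phi_plus]
      exact or_congr (ih1 σ hσ hDa) (ih2 σ hσ hDb)
  | par h1 h2 ih1 ih2 =>
      rename_i t u t' u'
      intro σ hσ hD
      have hb1 := derivSound hE h1 σ hσ
      have hb2 := derivSound hE h2 σ hσ
      show PhiG α n (.par (subst σ t) (subst σ t')) ↔
        PhiG α n (.par (subst σ u) (subst σ u'))
      constructor
      · intro hφ
        rcases phi_par.1 hφ with ⟨l1, l2, hbG⟩ | ⟨hm, hφa⟩ | ⟨hm, hφb⟩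
        · exact phi_par.2 (Or.inl ⟨fun hm => l1 (bisim_moveless hb1.symm hm),
            fun hm => l2 (bisim_moveless hb2.symm hm),
            (bisim_par hb1 hb2).symm.trans hbG⟩)
        · have hDa : DomG α n (subst σ t) := by
            intro μ v hs
            obtain ⟨g, hg, hbg⟩ := hD μ _ (Step.parL hs)
            exact ⟨g, hg, (bisim_par_movelessR hm).symm.trans hbg⟩
          exact phi_par.2 (Or.inr (Or.inl ⟨bisim_moveless hb2 hm, (ih1 σ hσ hDa).1 hφa⟩))
        · have hDb : DomG α n (subst σ t') := by
            intro μ v hs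
            obtain ⟨g, hg, hbg⟩ := hD μ _ (Step.parR hs)
            exact ⟨g, hg, (bisim_par_movelessL hm).symm.trans hbg⟩
          exact phi_par.2 (Or.inr (Or.inr ⟨bisim_moveless hb1 hm, (ih2 σ hσ hDb).1 hφb⟩))
      · intro hφ
        rcases phi_par.1 hφ with ⟨l1, l2, hbG⟩ | ⟨hm, hφa⟩ | ⟨hm, hφb⟩
        · exact phi_par.2 (Or.inl ⟨fun hm => l1 (bisim_moveless hb1 hm),
            fun hm => l2 (bisim_moveless hb2 hm),
            (bisim_par hb1 hb2).trans hbG⟩)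
        · have hmt : Moveless (subst σ t') := bisim_moveless hb2.symm hm
          have hDa : DomG α n (subst σ t) := by
            intro μ v hs
            obtain ⟨g, hg, hbg⟩ := hD μ _ (Step.parL hs)
            exact ⟨g, hg, (bisim_par_movelessR hmt).symm.trans hbg⟩
          exact phi_par.2 (Or.inr (Or.inl ⟨hmt, (ih1 σ hσ hDa).2 hφa⟩))
        · have hmt : Moveless (subst σ t) := bisim_moveless hb1.symm hm
          have hDb : DomG α n (subst σ t') := by
            intro μ v hs
            obtain ⟨g, hg, hbg⟩ := hD μ _ (Step.parR hs)
            exact ⟨g, hg, (bisim_par_movelessL hmt).symm.trans hbg⟩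
          exact phi_par.2 (Or.inr (Or.inr ⟨hmt, (ih2 σ hσ hDb).2 hφb⟩))
  | f h1 h2 ih1 ih2 =>
      rename_i t u t' u'
      intro σ hσ hD
      have hb1 := derivSound hE h1 σ hσ
      have hb2 := derivSound hE h2 σ hσ
      show PhiG α n (.f (subst σ t) (subst σ t')) ↔
        PhiG α n (.f (subst σ u) (subst σ u'))
      constructor
      · intro hφ
        rcases phi_f.1 hφ with ⟨l2, hbG⟩ | ⟨hm, hφa⟩
        · exact phi_f.2 (Or.inl ⟨fun hm => l2 (bisim_moveless hb2.symm hm),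
            (bisim_f hb1 hb2).symm.trans hbG⟩)
        · have hDa : DomG α n (subst σ t) := by
            intro μ v hs
            obtain ⟨g, hg, hbg⟩ := hD μ _ (Step.fL hs)
            exact ⟨g, hg, (bisim_par_movelessR hm).symm.trans hbg⟩
          exact phi_f.2 (Or.inr ⟨bisim_moveless hb2 hm, (ih1 σ hσ hDa).1 hφa⟩)
      · intro hφ
        rcases phi_f.1 hφ with ⟨l2, hbG⟩ | ⟨hm, hφa⟩
        · exact phi_f.2 (Or.inl ⟨fun hm => l2 (bisim_moveless hb2 hm),
            (bisim_f hb1 hb2).trans hbG⟩)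
        · have hmt : Moveless (subst σ t') := bisim_moveless hb2.symm hm
          have hDa : DomG α n (subst σ t) := by
            intro μ v hs
            obtain ⟨g, hg, hbg⟩ := hD μ _ (Step.fL hs)
            exact ⟨g, hg, (bisim_par_movelessR hmt).symm.trans hbg⟩
          exact phi_f.2 (Or.inr ⟨hmt, (ih1 σ hσ hDa).2 hφa⟩)

/-! ### Part 9: the equation ε_n and the final assembly -/

lemma closed_upTo {α : ActF} : ∀ i, Closed (upTo α i) := by
  intro i
  induction i with
  | zero => trivial
  | succ i ih =>
      cases i with
      | zero => show Closed (pow α 1); exact closed_pow 1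
      | succ j => exact ⟨ih, closed_pow (j + 2)⟩

lemma closed_sum0 {g : ℕ → Tm} (h : ∀ i, Closed (g i)) : ∀ m, Closed (sum0 g m) := by
  intro m
  induction m with
  | zero => exact h 0
  | succ m ih => exact ⟨ih, h (m + 1)⟩

lemma closed_pN {α : ActF} {n : ℕ} : Closed (pN α n) := by
  show Closed (sum0 (fun i => Tm.pre α.co (upTo α i)) n)
  exact closed_sum0 (g := fun i => Tm.pre α.co (upTo α i)) (fun i => closed_upTo i) n

lemma closed_epsLhs {α : ActF} {n : ℕ} : Closed (epsLhs α n) := ⟨trivial, closed_pN⟩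

lemma closed_epsRhs {α : ActF} {n : ℕ} : Closed (epsRhs α n) := by
  refine ⟨closed_pN, ?_⟩
  show Closed (sum0 (fun i => Tm.pre ActF.tau (upTo α i)) n)
  exact closed_sum0 (g := fun i => Tm.pre ActF.tau (upTo α i)) (fun i => closed_upTo i) n

lemma eps_bisim {α : ActF} (hα : α ≠ .tau) (n : ℕ) :
    Bisim (epsLhs α n) (epsRhs α n) := by
  refine bisim_intro (fun a b => a = epsLhs α n ∧ b = epsRhs α n) ?_ ?_ ⟨rfl, rfl⟩
  · rintro a b ⟨rfl, rfl⟩ μ a' hs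
    rcases G_step_inv hs with ⟨rfl, rfl⟩ | ⟨rfl, i, hi, rfl⟩
    · exact ⟨pN _ n, Step.plusL (Step.pre _ _),
        Or.inr (Or.inr (bisim_par_movelessL moveless_nil))⟩
    · exact ⟨upTo _ i, Step.plusR (sum0_step hi (Step.pre _ _)),
        Or.inr (Or.inr (bisim_par_movelessL moveless_nil))⟩
  · rintro a b ⟨rfl, rfl⟩ μ b' hs
    cases hs with
    | plusL h =>
        obtain ⟨rfl, rfl⟩ := step_pre_inv h
        exact ⟨.par .nil (pN _ n), G_step_alpha,
          Or.inr (Or.inr (bisim_par_movelessL moveless_nil))⟩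
    | plusR h =>
        obtain ⟨i, hi, hsi⟩ := step_sum0 h
        obtain ⟨rfl, rfl⟩ := step_pre_inv hsi
        exact ⟨.par .nil (upTo α i), G_step_tau hα hi,
          Or.inr (Or.inr (bisim_par_movelessL moveless_nil))⟩

lemma phi_epsLhs {α : ActF} {n : ℕ} : PhiG α n (epsLhs α n) :=
  ⟨epsLhs α n, SmP.refl _, (show ¬ Moveless (pN α n) from not_moveless_pN), Bisim.refl _⟩

lemma smp_sum0_inv {g : ℕ → Tm} (hg : ∀ i, ∃ ν b, g i = Tm.pre ν b) :
    ∀ {m : ℕ} {s : Tm}, SmP (sum0 g m) s → ATOM s → ∃ i, i ≤ m ∧ s = g i := by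
  intro m
  induction m with
  | zero =>
      intro s hSm hA
      obtain ⟨ν, b, hgb⟩ := hg 0
      rw [show sum0 g 0 = g 0 from rfl, hgb] at hSm
      cases hSm
      exact ⟨0, le_rfl, hgb.symm⟩
  | succ m ih =>
      intro s hSm hA
      cases hSm with
      | refl =>
          exact absurd hA (show ¬ ATOM (Tm.plus (sum0 g m) (g (m+1))) from fun h => h)
      | plusL h =>
          obtain ⟨i, hi, hs⟩ := ih h hA
          exact ⟨i, by omega, hs⟩
      | plusR h =>
          obtain ⟨ν, b, hgb⟩ := hg (m + 1)
          rw [hgb] at h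
          cases h
          exact ⟨m + 1, le_rfl, hgb.symm⟩

lemma not_phi_epsRhs {α : ActF} (hα : α ≠ .tau) {n : ℕ} : ¬ PhiG α n (epsRhs α n) := by
  rintro ⟨s, hSm, hA, hb⟩
  cases hSm with
  | refl => exact absurd hA (by simp [ATOM, epsRhs])
  | plusL h =>
      cases h
      exact pre_not_bisim_G hα hb
  | plusR h =>
      obtain ⟨i, hi, rfl⟩ := smp_sum0_inv (fun i => ⟨.tau, upTo α i, rfl⟩) h hA
      exact pre_not_bisim_G hα hb

lemma dom_epsLhs {α : ActF} {n : ℕ} : DomG α n (epsLhs α n) :=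
  fun μ v hs => ⟨v, hs, Bisim.refl v⟩
/-- **Non-finite axiomatisability of bisimilarity over CCS_f**: for every finite sound
axiom system `E` there is an `n` such that the sound equation `ε_n` is not derivable
from `E`; consequently, `∼_B` has no finite ground-complete axiomatisation over CCS_f. -/
theorem stmt_6 (α : ActF) (hα : α ≠ .tau) :
    (∀ E : Set Eqn, E.Finite → SystemSound Bisim E →
      ∃ n : ℕ, EqnSound Bisim (epsLhs α n) (epsRhs α n) ∧
        ¬ Deriv E (epsLhs α n) (epsRhs α n)) ∧
    ¬ ∃ E : Set Eqn, E.Finite ∧ SystemSound Bisim E ∧ GroundComplete Bisim E := by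
  have main : ∀ E : Set Eqn, E.Finite → SystemSound Bisim E →
      ∃ n : ℕ, EqnSound Bisim (epsLhs α n) (epsRhs α n) ∧
        ¬ Deriv E (epsLhs α n) (epsRhs α n) := by
    intro E hfin hsound
    obtain ⟨N, hsizes⟩ : ∃ N, ∀ e ∈ E, size e.1 ≤ N ∧ size e.2 ≤ N := by
      refine ⟨hfin.toFinset.sup (fun e => size e.1 + size e.2), ?_⟩
      intro e he
      have h := Finset.le_sup (f := fun e : Eqn => size e.1 + size e.2)
        (hfin.mem_toFinset.2 he)
      have h2 : size e.1 + size e.2 ≤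
          hfin.toFinset.sup (fun e : Eqn => size e.1 + size e.2) := h
      omega
    refine ⟨2 * N + 3, ?_, ?_⟩
    · intro ρ hρ
      rw [subst_closed closed_epsLhs ρ, subst_closed closed_epsRhs ρ]
      exact eps_bisim hα _
    · intro hder
      have hD : DomG α (2*N+3) (subst (fun _ => Tm.nil) (epsLhs α (2*N+3))) := by
        rw [subst_closed closed_epsLhs]
        exact dom_epsLhs
      have hiff := INV hα hsound hsizes (by omega : 2 * N + 2 < 2 * N + 3) hder
        (fun _ => Tm.nil) (fun _ => trivial) hD
      rw [subst_closed closed_epsLhs, subst_closed closed_epsRhs] at hiff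
      exact not_phi_epsRhs hα (hiff.1 phi_epsLhs)
  refine ⟨main, ?_⟩
  rintro ⟨E, hfin, hsound, hGC⟩
  obtain ⟨n, hEq, hnd⟩ := main E hfin hsound
  have hb : Bisim (epsLhs α n) (epsRhs α n) := by
    have h := hEq (fun _ => Tm.nil) (fun _ => trivial)
    rwa [subst_closed closed_epsLhs, subst_closed closed_epsRhs] at h
  exact hnd (hGC _ _ closed_epsLhs closed_epsRhs hb)
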